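/- arXiv:1410.2404 — 5 statements merged into one kernel-verified Lean document; each statement's English description precedes it below -/
import Mathlib

section
/- Let n ≥ 2 and let A be a real symmetric n×n matrix with trace(A) = 0. Then trace(A³) ≥ -((n-2)/√(n(n-1))) · ‖A‖³, where ‖A‖ = √(trace(A²)) denotes the Frobenius norm of A. -/
/-!
Diagonalising `A` turns `trace (A ^ k)` into the power sum `∑ λᵢ ^ k` of its eigenvalues, so it
suffices to treat reals with `∑ λᵢ = 0` and `∑ λᵢ ^ 2 = p`. Cauchy–Schwarz on the other `n - 1`
entries gives `λᵢ ≥ -(n - 1) μ` with `μ = √(p / (n (n - 1)))`, and then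
`0 ≤ ∑ (λᵢ + (n - 1) μ) (λᵢ - μ) ^ 2` expands to the inequality; equality holds when one
eigenvalue is `-(n - 1) μ` and the others are `μ`.
-/

open Finset Real

namespace Matrix.IsHermitian

variable {𝕜 ι : Type*} [RCLike 𝕜] [Fintype ι] [DecidableEq ι] {A : Matrix ι ι 𝕜}

theorem trace_pow_eq_sum_eigenvalues_pow (hA : A.IsHermitian) (k : ℕ) :
    (A ^ k).trace = ∑ i, (hA.eigenvalues i : 𝕜) ^ k := by
  conv_lhs => rw [hA.spectral_theorem, ← map_pow, Unitary.conjStarAlgAut_apply, trace_mul_cycle,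
    Unitary.coe_star_mul_self, one_mul, diagonal_pow, trace_diagonal]
  rfl

end Matrix.IsHermitian

section PowerSums

variable {ι : Type*} [Fintype ι] {x : ι → ℝ}

theorem card_mul_sq_le_of_sum_eq_zero (hx : ∑ j, x j = 0) (i : ι) :
    Fintype.card ι * x i ^ 2 ≤ (Fintype.card ι - 1) * ∑ j, x j ^ 2 := by
  classical
  have : Nonempty ι := ⟨i⟩
  have hcs := sq_sum_le_card_mul_sum_sq (s := univ.erase i) (f := x)
  rw [sum_erase_eq_sub (mem_univ i), sum_erase_eq_sub (mem_univ i), hx,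
    card_erase_of_mem (mem_univ i), card_univ, Nat.cast_pred Fintype.card_pos] at hcs
  linarith

theorem neg_card_sub_one_mul_le_of_sum_eq_zero (hx : ∑ j, x j = 0) (i : ι) :
    -((Fintype.card ι - 1) * (√(∑ j, x j ^ 2) / √(Fintype.card ι * (Fintype.card ι - 1))))
      ≤ x i := by
  have hcard := card_mul_sq_le_of_sum_eq_zero hx i
  set n : ℝ := (Fintype.card ι : ℝ)
  have hn : 1 ≤ n := Nat.one_le_cast.mpr (Fintype.card_pos_iff.mpr ⟨i⟩)
  have hbound : x i ^ 2 ≤ ((n - 1) * (√(∑ j, x j ^ 2) / √(n * (n - 1)))) ^ 2 := by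
    rcases hn.eq_or_lt with h1 | h1
    · rw [← h1] at hcard ⊢
      nlinarith [sq_nonneg (x i)]
    rw [mul_div_assoc', div_pow, mul_pow, sq_sqrt (sum_nonneg fun j _ => sq_nonneg _),
      sq_sqrt (by positivity), le_div_iff₀ (by nlinarith)]
    nlinarith
  exact (abs_le_of_sq_le_sq' hbound (mul_nonneg (by linarith) (by positivity))).1

theorem sum_pow_three_ge_of_sum_eq_zero (hι : 2 ≤ Fintype.card ι) (hx : ∑ i, x i = 0) :
    -((Fintype.card ι - 2) / √(Fintype.card ι * (Fintype.card ι - 1))) * √(∑ i, x i ^ 2) ^ 3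
      ≤ ∑ i, x i ^ 3 := by
  have hlow := neg_card_sub_one_mul_le_of_sum_eq_zero hx
  have hn : (2 : ℝ) ≤ Fintype.card ι := by exact_mod_cast hι
  set n : ℝ := (Fintype.card ι : ℝ)
  set p := ∑ i, x i ^ 2
  set μ := √p / √(n * (n - 1))
  have hp : 0 ≤ p := sum_nonneg fun i _ => sq_nonneg _
  have hμ : n * (n - 1) * μ ^ 2 = p := by
    rw [div_pow, sq_sqrt hp, sq_sqrt (by nlinarith)]
    field_simp [show n - 1 ≠ 0 by linarith]
  have hnonneg : 0 ≤ ∑ i, (x i + (n - 1) * μ) * (x i - μ) ^ 2 :=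
    sum_nonneg fun i _ => mul_nonneg (neg_le_iff_add_nonneg.mp (hlow i)) (sq_nonneg _)
  have hexpand : ∑ i, (x i + (n - 1) * μ) * (x i - μ) ^ 2 = ∑ i, x i ^ 3 + (n - 2) * μ * p := by
    have hpoint : ∀ i, (x i + (n - 1) * μ) * (x i - μ) ^ 2 =
        x i ^ 3 + (n - 3) * μ * x i ^ 2 + (3 - 2 * n) * μ ^ 2 * x i + (n - 1) * μ ^ 3 :=
      fun i => by ring
    simp only [hpoint, sum_add_distrib, ← mul_sum, hx, sum_const, card_univ, nsmul_eq_mul]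
    linear_combination μ * hμ
  have hlhs : -((n - 2) / √(n * (n - 1))) * √p ^ 3 = -((n - 2) * μ * p) := by
    rw [pow_succ, sq_sqrt hp]
    ring
  linarith

end PowerSums

/-- Okumura inequality: for a trace-free real symmetric `n × n` matrix `A` (`n ≥ 2`),
`trace(A³) ≥ -((n-2)/√(n(n-1))) · ‖A‖³`, where `‖A‖ = √(trace(A²))` is the Frobenius norm. -/
theorem okumura_inequality {n : ℕ} (hn : 2 ≤ n) (A : Matrix (Fin n) (Fin n) ℝ)
    (hA : A.IsSymm) (htr : A.trace = 0) :
    Matrix.trace (A * A * A) ≥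
      -(((n : ℝ) - 2) / Real.sqrt ((n : ℝ) * ((n : ℝ) - 1))) *
        (Real.sqrt (Matrix.trace (A * A))) ^ 3 := by
  have hA' : A.IsHermitian := Matrix.isHermitian_iff_isSymm.mpr hA
  have hsum : ∑ i, hA'.eigenvalues i = 0 := by
    simpa [hA'.trace_eq_sum_eigenvalues] using htr
  rw [← sq, ← pow_succ, hA'.trace_pow_eq_sum_eigenvalues_pow, hA'.trace_pow_eq_sum_eigenvalues_pow]
  simpa using sum_pow_three_ge_of_sum_eq_zero (by simpa using hn) hsum
end

section
/- Let n ≥ 3 and let x₁, …, xₙ be real numbers with x₁ + ⋯ + xₙ = 0. Then x₁³ + ⋯ + xₙ³ = -((n-2)/√(n(n-1))) · (x₁² + ⋯ + xₙ²)^{3/2} holds if and only if there exist λ ≥ 0 and an index j such that xⱼ = -(n-1)λ and xᵢ = λ for all i ≠ j. -/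
/-!
Let `S = ∑ xᵢ²` and let `λ ≥ 0` be given by `n (n - 1) λ² = S`, so that the right-hand side is
`-(n - 2) λ S`. When `∑ xᵢ = 0` one has the identity
`∑ (xᵢ - λ)² (xᵢ + (n - 1) λ) = ∑ xᵢ³ + (n - 2) λ S`, and every term on the left is nonnegative,
because Cauchy–Schwarz applied to `∑_{k ≠ i} x_k = -xᵢ` gives `|xᵢ| ≤ (n - 1) λ`. Hence equality
holds iff every `xᵢ` is `λ` or `-(n - 1) λ`, and `∑ xᵢ = 0` then forces exactly one `xᵢ` to be
`-(n - 1) λ`.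
-/

open Finset Fintype Real

theorem div_sqrt_mul_rpow_three_halves (c a : ℝ) {S : ℝ} (hS : 0 ≤ S) :
    c / √a * S ^ ((3 : ℝ) / 2) = c * √(S / a) * S := by
  rw [sqrt_div hS, show (3 : ℝ) / 2 = 1 + 1 / 2 by norm_num, rpow_add' hS (by norm_num),
    rpow_one, ← sqrt_eq_rpow]
  ring

namespace Okumura

variable {ι : Type*} [Fintype ι] {x : ι → ℝ} {l : ℝ}

theorem card_mul_sq_le_of_sum_eq_zero (hx : ∑ j, x j = 0) (i : ι) :
    (card ι : ℝ) * x i ^ 2 ≤ (card ι - 1) * ∑ j, x j ^ 2 := by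
  classical
  have hsum : ∑ j ∈ univ.erase i, x j = -x i := by
    linarith [add_sum_erase univ x (mem_univ i)]
  have hsq : ∑ j ∈ univ.erase i, x j ^ 2 = ∑ j, x j ^ 2 - x i ^ 2 := by
    linarith [add_sum_erase univ (fun j => x j ^ 2) (mem_univ i)]
  have hcs := sq_sum_le_card_mul_sum_sq (s := univ.erase i) (f := x)
  rw [hsum, hsq, cast_card_erase_of_mem (mem_univ i), card_univ] at hcs
  linear_combination hcs

theorem add_card_sub_one_mul_nonneg (hx : ∑ j, x j = 0) (hl : 0 ≤ l)
    (hS : (card ι : ℝ) * (card ι - 1) * l ^ 2 = ∑ j, x j ^ 2) (i : ι) :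
    0 ≤ x i + (card ι - 1) * l := by
  have hN : (1 : ℝ) ≤ card ι := by exact_mod_cast card_pos_iff.2 ⟨i⟩
  have hsq : x i ^ 2 ≤ ((card ι - 1) * l) ^ 2 := by
    refine le_of_mul_le_mul_left ?_ (by linarith : (0 : ℝ) < card ι)
    linear_combination card_mul_sq_le_of_sum_eq_zero hx i - (card ι - 1) * hS
  linarith [(abs_le_of_sq_le_sq' hsq (by positivity)).1]

theorem sum_sq_sub_mul_add_eq (hx : ∑ j, x j = 0)
    (hS : (card ι : ℝ) * (card ι - 1) * l ^ 2 = ∑ j, x j ^ 2) :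
    ∑ i, (x i - l) ^ 2 * (x i + (card ι - 1) * l) =
      ∑ i, x i ^ 3 + (card ι - 2) * l * ∑ i, x i ^ 2 := by
  have hexpand : ∀ i, (x i - l) ^ 2 * (x i + (card ι - 1) * l) = x i ^ 3 +
      (card ι - 3) * l * x i ^ 2 - (2 * card ι - 3) * l ^ 2 * x i + (card ι - 1) * l ^ 3 :=
    fun i => by ring
  simp only [hexpand, sum_add_distrib, sum_sub_distrib, ← mul_sum, hx, sum_const, card_univ,
    nsmul_eq_mul]
  linear_combination l * hS

theorem sum_pow_three_eq_iff (hx : ∑ j, x j = 0) (hl : 0 ≤ l)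
    (hS : (card ι : ℝ) * (card ι - 1) * l ^ 2 = ∑ j, x j ^ 2) :
    ∑ i, x i ^ 3 = -((card ι - 2) * l * ∑ i, x i ^ 2) ↔
      ∀ i, x i = l ∨ x i = -(card ι - 1) * l := by
  have hterm : ∀ i ∈ univ, 0 ≤ (x i - l) ^ 2 * (x i + (card ι - 1) * l) :=
    fun i _ => mul_nonneg (sq_nonneg _) (add_card_sub_one_mul_nonneg hx hl hS i)
  rw [← add_eq_zero_iff_eq_neg, ← sum_sq_sub_mul_add_eq hx hS, sum_eq_zero_iff_of_nonneg hterm]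
  simp only [mem_univ, true_imp_iff, mul_eq_zero, pow_eq_zero_iff two_ne_zero, sub_eq_zero,
    add_eq_zero_iff_eq_neg, neg_mul]

theorem exists_eq_neg_mul_of_forall_eq_or_eq [Nonempty ι] (hx : ∑ i, x i = 0)
    (h : ∀ i, x i = l ∨ x i = -(card ι - 1) * l) :
    ∃ j, x j = -(card ι - 1) * l ∧ ∀ i ≠ j, x i = l := by
  rcases eq_or_ne l 0 with rfl | hl
  · exact ⟨Classical.arbitrary ι, by simpa using h _, fun i _ => by simpa using h i⟩
  have hx_eq : ∀ i, x i = l - card ι * l * if x i ≠ l then 1 else 0 := fun i => by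
    split_ifs with hne
    · linarith [(h i).resolve_left hne]
    · simpa using hne
  have hcard_filter : #(univ.filter fun i => x i ≠ l) = 1 := by
    rw [Finset.sum_congr rfl fun i _ => hx_eq i, sum_sub_distrib, ← mul_sum, sum_boole, sum_const,
      card_univ, nsmul_eq_mul] at hx
    have hN : (card ι : ℝ) ≠ 0 := by exact_mod_cast Fintype.card_ne_zero
    have : (card ι : ℝ) * l * (1 - #(univ.filter fun i => x i ≠ l)) = 0 := by
      linear_combination hx
    exact_mod_cast (sub_eq_zero.1 ((mul_eq_zero.1 this).resolve_left (mul_ne_zero hN hl))).symm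
  obtain ⟨j, hj⟩ := card_eq_one.1 hcard_filter
  have hmem : ∀ i, x i ≠ l ↔ i = j := fun i => by simpa using congrArg (i ∈ ·) hj
  refine ⟨j, (h j).resolve_left ((hmem j).2 rfl), fun i hij => ?_⟩
  by_contra hi
  exact hij ((hmem i).1 hi)

theorem sum_sq_eq_of_eq_neg_mul {j : ι} {lam : ℝ} (hj : x j = -(card ι - 1) * lam)
    (hi : ∀ i ≠ j, x i = lam) :
    ∑ i, x i ^ 2 = card ι * (card ι - 1) * lam ^ 2 := by
  classical
  rw [← add_sum_erase _ _ (mem_univ j),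
    Finset.sum_congr rfl fun i hi' => by rw [hi i (ne_of_mem_erase hi')], sum_const,
    nsmul_eq_mul, cast_card_erase_of_mem (mem_univ j), card_univ, hj]
  ring

theorem sum_pow_three_eq_iff_exists (hcard : 2 ≤ card ι) (hx : ∑ i, x i = 0) :
    ∑ i, x i ^ 3 =
        -((card ι - 2) / √(card ι * (card ι - 1))) * (∑ i, x i ^ 2) ^ ((3 : ℝ) / 2) ↔
      ∃ lam : ℝ, 0 ≤ lam ∧ ∃ j, x j = -(card ι - 1) * lam ∧ ∀ i ≠ j, x i = lam := by
  have hN : (0 : ℝ) < card ι * (card ι - 1) := by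
    have : (2 : ℝ) ≤ card ι := by exact_mod_cast hcard
    nlinarith
  have : Nonempty ι := card_pos_iff.1 (by omega)
  set l := √((∑ i, x i ^ 2) / (card ι * (card ι - 1))) with hl_def
  have hl : 0 ≤ l := sqrt_nonneg _
  have hS : (card ι : ℝ) * (card ι - 1) * l ^ 2 = ∑ i, x i ^ 2 := by
    rw [sq_sqrt (by positivity), mul_div_cancel₀ _ hN.ne']
  rw [neg_mul, div_sqrt_mul_rpow_three_halves _ _ (sum_nonneg fun i _ => sq_nonneg (x i)),
    ← hl_def, sum_pow_three_eq_iff hx hl hS]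
  constructor
  · intro h
    exact ⟨l, hl, exists_eq_neg_mul_of_forall_eq_or_eq hx h⟩
  · rintro ⟨lam, hlam, j, hj, hi⟩
    have hl_eq : l = lam := by
      refine (pow_left_inj₀ hl hlam two_ne_zero).1 (mul_left_cancel₀ hN.ne' ?_)
      rw [hS, sum_sq_eq_of_eq_neg_mul hj hi]
    intro i
    rcases eq_or_ne i j with rfl | hij
    · exact .inr (hl_eq ▸ hj)
    · exact .inl (hl_eq ▸ hi i hij)

end Okumura

/-- Equality case of the scalar Okumura inequality: if `x₁ + ⋯ + xₙ = 0` (`n ≥ 3`), then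
`x₁³ + ⋯ + xₙ³ = -((n-2)/√(n(n-1))) · (x₁² + ⋯ + xₙ²)^(3/2)` if and only if there exist
`λ ≥ 0` and an index `j` with `xⱼ = -(n-1)λ` and `xᵢ = λ` for all `i ≠ j`. -/
theorem okumura_scalar_equality_case {n : ℕ} (hn : 3 ≤ n) (x : Fin n → ℝ)
    (hx : ∑ i, x i = 0) :
    ∑ i, (x i) ^ 3 =
      -(((n : ℝ) - 2) / Real.sqrt ((n : ℝ) * ((n : ℝ) - 1))) *
        (∑ i, (x i) ^ 2) ^ ((3 : ℝ) / 2) ↔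
    ∃ lam : ℝ, 0 ≤ lam ∧ ∃ j : Fin n,
      x j = -((n : ℝ) - 1) * lam ∧ ∀ i : Fin n, i ≠ j → x i = lam := by
  simpa only [Fintype.card_fin] using
    Okumura.sum_pow_three_eq_iff_exists (by rw [Fintype.card_fin]; omega) hx
end

section
/- Let n ≥ 2 and let S : Fin n → Fin n → Fin n → ℝ be totally symmetric (invariant under all permutations of its three indices) and trace-free, i.e. ∑_i S(k,i,i) = 0 for every k. Let U be a real symmetric n×n matrix with trace(U) = 0 and Frobenius norm ‖U‖ = 1. Then ∑_k ( ∑_{i,j} S(k,i,j)·U_{ij} )² ≤ (n/(n+2)) · ∑_{k,i,j} S(k,i,j)², i.e. ∑_k ⟨S_k, U⟩² ≤ (n/(n+2))·‖S‖². -/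
open Finset Matrix


lemma opbound {n : ℕ} (hn : 2 ≤ n) (U : Matrix (Fin n) (Fin n) ℝ) (hU : U.IsSymm)
    (htr : U.trace = 0) (hfro : ∑ i, ∑ j, (U i j)^2 = 1) (v : Fin n → ℝ) :
    ∑ k, ((U *ᵥ v) k)^2 ≤ (((n:ℝ)-1)/n) * ∑ k, (v k)^2 := by
  have hH : U.IsHermitian := by
    rwa [Matrix.IsHermitian, Matrix.conjTranspose_eq_transpose_of_trivial]
  set V : Matrix (Fin n) (Fin n) ℝ := (hH.eigenvectorUnitary : Matrix (Fin n) (Fin n) ℝ) with hV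
  set lam := hH.eigenvalues with hlam
  have hspec : U = V * Matrix.diagonal lam * star V := by simpa using hH.spectral_theorem
  have hVV : star V * V = 1 := Matrix.mem_unitaryGroup_iff'.mp hH.eigenvectorUnitary.2
  have hVV' : V * star V = 1 := Matrix.mem_unitaryGroup_iff.mp hH.eigenvectorUnitary.2
  -- trace U = ∑ lam
  have htrace : ∑ i, lam i = 0 := by
    have h : U.trace = (Matrix.diagonal lam).trace := by
      rw [hspec, Matrix.trace_mul_cycle, hVV, Matrix.one_mul]
    rw [htr, Matrix.trace_diagonal] at h
    linarith [h]
  -- ∑ lam² = 1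
  have hsq : ∑ i, (lam i)^2 = 1 := by
    have h1 : (U * U).trace = ∑ i, (lam i)^2 := by
      have h : U * U = V * (Matrix.diagonal lam * Matrix.diagonal lam) * star V := by
        rw [hspec]
        rw [show V * Matrix.diagonal lam * star V * (V * Matrix.diagonal lam * star V)
          = V * (Matrix.diagonal lam * (star V * V) * Matrix.diagonal lam) * star V by
            simp [Matrix.mul_assoc]]
        rw [hVV]; simp [Matrix.mul_assoc]
      rw [h, Matrix.trace_mul_cycle, hVV, Matrix.one_mul,
        Matrix.diagonal_mul_diagonal, Matrix.trace_diagonal]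
      exact Finset.sum_congr rfl (fun i _ => (sq (lam i)).symm)
    have h2 : (U * U).trace = ∑ i, ∑ j, (U i j)^2 := by
      rw [Matrix.trace]
      refine Finset.sum_congr rfl (fun i _ => ?_)
      rw [Matrix.diag, Matrix.mul_apply]
      exact Finset.sum_congr rfl (fun j _ => by rw [sq, ← hU.apply i j])
    rw [h2, hfro] at h1
    exact h1.symm
  -- eigenvalue bound
  have hev : ∀ k, (lam k)^2 ≤ ((n:ℝ)-1)/n := by
    intro k
    have hcard : ((Finset.univ.erase k).card : ℝ) = (n:ℝ) - 1 := by
      rw [Finset.card_erase_of_mem (Finset.mem_univ k)]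
      simp
      have : 1 ≤ n := le_trans (by norm_num) hn
      push_cast [Nat.cast_sub this]
      ring
    have hsum : ∑ i ∈ Finset.univ.erase k, lam i = - lam k := by
      have := Finset.add_sum_erase Finset.univ lam (Finset.mem_univ k)
      rw [htrace] at this
      linarith
    have hcs : (∑ i ∈ Finset.univ.erase k, lam i)^2
        ≤ (Finset.univ.erase k).card * ∑ i ∈ Finset.univ.erase k, (lam i)^2 :=
      sq_sum_le_card_mul_sum_sq
    have hsub : ∑ i ∈ Finset.univ.erase k, (lam i)^2 = 1 - (lam k)^2 := by
      have h := Finset.add_sum_erase Finset.univ (fun i => (lam i)^2) (Finset.mem_univ k)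
      rw [hsq] at h
      linarith
    rw [hsum, hsub, hcard] at hcs
    have hn1 : (0:ℝ) < (n:ℝ) := by positivity
    rw [neg_sq] at hcs
    rw [le_div_iff₀ hn1]
    nlinarith
  -- quadratic form bound
  have hprod : ∀ y z : Fin n → ℝ, ∑ k, ((V *ᵥ y) k) * ((V *ᵥ z) k) = ∑ k, y k * z k := by
    intro y z
    have hVt : Vᵀ * V = 1 := by
      rwa [Matrix.star_eq_conjTranspose, Matrix.conjTranspose_eq_transpose_of_trivial] at hVV
    have h1 : ∑ k, ((V *ᵥ y) k) * ((V *ᵥ z) k) = (V *ᵥ y) ⬝ᵥ (V *ᵥ z) := rfl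
    rw [h1, Matrix.dotProduct_mulVec, ← Matrix.vecMul_transpose, Matrix.vecMul_vecMul, hVt,
      Matrix.vecMul_one]
    rfl
  set u : Fin n → ℝ := star V *ᵥ v with hu
  have hvu : V *ᵥ u = v := by
    rw [hu, Matrix.mulVec_mulVec, hVV', Matrix.one_mulVec]
  have hUv : U *ᵥ v = V *ᵥ (Matrix.diagonal lam *ᵥ u) := by
    rw [hspec, ← Matrix.mulVec_mulVec, ← Matrix.mulVec_mulVec, hu]
  have hnv : ∑ k, (v k)^2 = ∑ k, (u k)^2 := by
    have := hprod u u
    rw [hvu] at this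
    simpa [sq] using this
  have hlhs : ∑ k, ((U *ᵥ v) k)^2 = ∑ k, (lam k)^2 * (u k)^2 := by
    have h2 := hprod (Matrix.diagonal lam *ᵥ u) (Matrix.diagonal lam *ᵥ u)
    calc ∑ k, ((U *ᵥ v) k)^2 = ∑ k, ((V *ᵥ (Matrix.diagonal lam *ᵥ u)) k) *
          ((V *ᵥ (Matrix.diagonal lam *ᵥ u)) k) := by
          rw [hUv]; exact Finset.sum_congr rfl fun k _ => sq ((V *ᵥ (Matrix.diagonal lam *ᵥ u)) k)
      _ = ∑ k, ((Matrix.diagonal lam *ᵥ u) k) * ((Matrix.diagonal lam *ᵥ u) k) := h2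
      _ = ∑ k, (lam k)^2 * (u k)^2 := by
          refine Finset.sum_congr rfl fun k _ => ?_
          rw [Matrix.mulVec_diagonal]
          ring
  rw [hlhs, hnv]
  rw [Finset.mul_sum]
  refine Finset.sum_le_sum fun k _ => ?_
  have h3 := hev k
  have h4 : (0:ℝ) ≤ (u k)^2 := sq_nonneg _
  nlinarith


lemma sum3_swap12 {n : ℕ} (f : Fin n → Fin n → Fin n → ℝ) :
    ∑ k, ∑ i, ∑ j, f k i j = ∑ k, ∑ i, ∑ j, f i k j := Finset.sum_comm

lemma sum3_rot {n : ℕ} (f : Fin n → Fin n → Fin n → ℝ) :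
    ∑ k, ∑ i, ∑ j, f k i j = ∑ k, ∑ i, ∑ j, f j k i := by
  rw [Finset.sum_comm]
  exact Finset.sum_congr rfl fun _ _ => Finset.sum_comm

lemma sum3_rot2 {n : ℕ} (f : Fin n → Fin n → Fin n → ℝ) :
    ∑ k, ∑ i, ∑ j, f k i j = ∑ k, ∑ i, ∑ j, f i j k :=
  (sum3_rot f).trans (sum3_rot _)

lemma sum3_swap13 {n : ℕ} (f : Fin n → Fin n → Fin n → ℝ) :
    ∑ k, ∑ i, ∑ j, f k i j = ∑ k, ∑ i, ∑ j, f j i k :=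
  (sum3_rot f).trans (sum3_swap12 _)

set_option maxHeartbeats 1600000 in
theorem kato_core {n : ℕ} (hn : 2 ≤ n) (S : Fin n → Fin n → Fin n → ℝ)
    (hS₁ : ∀ k i j, S k i j = S i k j) (hS₂ : ∀ k i j, S k i j = S k j i)
    (htrS : ∀ k, ∑ i, S k i i = 0)
    (U : Fin n → Fin n → ℝ) (hU : ∀ i j, U i j = U j i)
    (htrU : ∑ i, U i i = 0) (hfro : ∑ i, ∑ j, (U i j)^2 = 1)
    (hop : ∀ v : Fin n → ℝ, (n:ℝ) * ∑ k, (∑ i, U k i * v i)^2 ≤ ((n:ℝ)-1) * ∑ k, (v k)^2) :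
    ∑ k, (∑ i, ∑ j, S k i j * U i j)^2 ≤ ((n:ℝ)/((n:ℝ)+2)) * ∑ k, ∑ i, ∑ j, (S k i j)^2 := by
  have hN2 : (2:ℝ) ≤ (n:ℝ) := by exact_mod_cast hn
  set N : ℝ := (n:ℝ) with hNdef
  obtain ⟨v, hv⟩ : ∃ v : Fin n → ℝ, ∀ k, v k = ∑ i, ∑ j, S k i j * U i j := ⟨_, fun _ => rfl⟩
  obtain ⟨w, hw⟩ : ∃ w : Fin n → ℝ, ∀ k, w k = ∑ i, U k i * v i := ⟨_, fun _ => rfl⟩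
  obtain ⟨a, ha⟩ : ∃ a : ℝ, a = ∑ k, (v k)^2 := ⟨_, rfl⟩
  obtain ⟨c, hc⟩ : ∃ c : ℝ, c = ∑ k, (w k)^2 := ⟨_, rfl⟩
  obtain ⟨sS, hsS⟩ : ∃ x : ℝ, x = ∑ k, ∑ i, ∑ j, (S k i j)^2 := ⟨_, rfl⟩
  have hS₃ : ∀ k i j, S j i k = S k i j := fun k i j => by
    rw [hS₁ j i k, hS₂ i j k, hS₁ i k j]
  have tcongr : ∀ f g : Fin n → Fin n → Fin n → ℝ, (∀ k i j, f k i j = g k i j) →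
      (∑ k, ∑ i, ∑ j, f k i j) = ∑ k, ∑ i, ∑ j, g k i j := fun f g h =>
    Finset.sum_congr rfl fun k _ => Finset.sum_congr rfl fun i _ =>
      Finset.sum_congr rfl fun j _ => h k i j
  -- ⟨S_k, U⟩ pairings with Q-terms
  have hq1 : ∑ k, ∑ i, ∑ j, S k i j * (v k * U i j) = a := by
    rw [ha]
    refine Finset.sum_congr rfl fun k _ => ?_
    calc ∑ i, ∑ j, S k i j * (v k * U i j) = v k * ∑ i, ∑ j, S k i j * U i j := by
          rw [Finset.mul_sum]
          refine Finset.sum_congr rfl fun i _ => ?_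
          rw [Finset.mul_sum]
          exact Finset.sum_congr rfl fun j _ => by ring
      _ = v k ^ 2 := by rw [← hv k, sq]
  have hq2 : ∑ k, ∑ i, ∑ j, S k i j * (v i * U j k) = a := by
    refine (sum3_swap12 _).trans (.trans (tcongr _ _ fun k i j => ?_) hq1)
    show S i k j * (v k * U j i) = S k i j * (v k * U i j)
    rw [← hS₁ k i j, hU j i]
  have hq3 : ∑ k, ∑ i, ∑ j, S k i j * (v j * U k i) = a := by
    refine (sum3_swap13 _).trans (.trans (tcongr _ _ fun k i j => ?_) hq1)
    show S j i k * (v k * U j i) = S k i j * (v k * U i j)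
    rw [hS₃ k i j, hU j i]
  -- S with R-terms vanish
  have hr1 : ∑ k, ∑ i, ∑ j, S k i j * ((if i = j then (1:ℝ) else 0) * w k) = 0 := by
    have h2 : ∀ k i, ∑ j, S k i j * ((if i = j then (1:ℝ) else 0) * w k) = S k i i * w k := by
      intro k i
      simp only [mul_ite, ite_mul, one_mul, mul_one, mul_zero, zero_mul, Finset.sum_ite_eq,
        Finset.mem_univ, if_true]
    calc ∑ k, ∑ i, ∑ j, S k i j * ((if i = j then (1:ℝ) else 0) * w k)
        = ∑ k, ∑ i, S k i i * w k :=
          Finset.sum_congr rfl fun k _ => Finset.sum_congr rfl fun i _ => h2 k i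
      _ = 0 := by
          refine Finset.sum_eq_zero fun k _ => ?_
          rw [← Finset.sum_mul, htrS k, zero_mul]
  have hr2 : ∑ k, ∑ i, ∑ j, S k i j * ((if j = k then (1:ℝ) else 0) * w i) = 0 := by
    have h2 : ∀ k i, ∑ j, S k i j * ((if j = k then (1:ℝ) else 0) * w i) = S k i k * w i := by
      intro k i
      simp only [mul_ite, ite_mul, one_mul, mul_one, mul_zero, zero_mul, Finset.sum_ite_eq',
        Finset.mem_univ, if_true]
    calc ∑ k, ∑ i, ∑ j, S k i j * ((if j = k then (1:ℝ) else 0) * w i)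
        = ∑ k, ∑ i, S k i k * w i :=
          Finset.sum_congr rfl fun k _ => Finset.sum_congr rfl fun i _ => h2 k i
      _ = ∑ i, ∑ k, S i k k * w i := by
          rw [Finset.sum_comm]
          exact Finset.sum_congr rfl fun i _ => Finset.sum_congr rfl fun k _ => by
            rw [hS₁ k i k]
      _ = 0 := by
          refine Finset.sum_eq_zero fun i _ => ?_
          rw [← Finset.sum_mul, htrS i, zero_mul]
  have hr3 : ∑ k, ∑ i, ∑ j, S k i j * ((if k = i then (1:ℝ) else 0) * w j) = 0 := by
    have h2 : ∀ k j, ∑ i, S k i j * ((if k = i then (1:ℝ) else 0) * w j) = S k k j * w j := by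
      intro k j
      simp only [mul_ite, ite_mul, one_mul, mul_one, mul_zero, zero_mul, Finset.sum_ite_eq,
        Finset.mem_univ, if_true]
    calc ∑ k, ∑ i, ∑ j, S k i j * ((if k = i then (1:ℝ) else 0) * w j)
        = ∑ k, ∑ j, ∑ i, S k i j * ((if k = i then (1:ℝ) else 0) * w j) :=
          Finset.sum_congr rfl fun k _ => Finset.sum_comm
      _ = ∑ k, ∑ j, S k k j * w j :=
          Finset.sum_congr rfl fun k _ => Finset.sum_congr rfl fun j _ => h2 k j
      _ = ∑ j, ∑ k, S j k k * w j := by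
          rw [Finset.sum_comm]
          exact Finset.sum_congr rfl fun j _ => Finset.sum_congr rfl fun k _ => by
            rw [hS₂ k k j, hS₁ k j k]
      _ = 0 := by
          refine Finset.sum_eq_zero fun j _ => ?_
          rw [← Finset.sum_mul, htrS j, zero_mul]
  -- canonical c forms
  have hcform : ∑ k, ∑ i, ∑ j, (U k i * v i) * (U k j * v j) = c := by
    rw [hc]
    refine Finset.sum_congr rfl fun k _ => ?_
    rw [hw k, pow_two, Finset.sum_mul_sum]
  have hcform2 : ∑ k, ∑ i, (U k i * v i) * w k = c := by
    rw [hc]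
    refine Finset.sum_congr rfl fun k _ => ?_
    rw [← Finset.sum_mul, ← hw k, pow_two]
  -- Q·Q pairings
  have hq11 : ∑ k, ∑ i, ∑ j, (v k * U i j)^2 = a := by
    have h2 : ∀ k, ∑ i, ∑ j, (v k * U i j)^2 = v k ^2 * ∑ i, ∑ j, (U i j)^2 := by
      intro k
      rw [Finset.mul_sum]
      refine Finset.sum_congr rfl fun i _ => ?_
      rw [Finset.mul_sum]
      exact Finset.sum_congr rfl fun j _ => by ring
    calc ∑ k, ∑ i, ∑ j, (v k * U i j)^2 = ∑ k, v k ^2 * ∑ i, ∑ j, (U i j)^2 :=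
          Finset.sum_congr rfl fun k _ => h2 k
      _ = a := by rw [hfro, ha]; exact Finset.sum_congr rfl fun k _ => mul_one _
  have hq22 : ∑ k, ∑ i, ∑ j, (v i * U j k)^2 = a := by
    refine (sum3_swap12 _).trans (.trans (tcongr _ _ fun k i j => ?_) hq11)
    show (v k * U j i)^2 = (v k * U i j)^2
    rw [hU j i]
  have hq33 : ∑ k, ∑ i, ∑ j, (v j * U k i)^2 = a := by
    refine (sum3_swap13 _).trans (.trans (tcongr _ _ fun k i j => ?_) hq11)
    show (v k * U j i)^2 = (v k * U i j)^2
    rw [hU j i]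
  have hq12 : ∑ k, ∑ i, ∑ j, (v k * U i j) * (v i * U j k) = c := by
    refine (sum3_rot2 _).trans (.trans (tcongr _ _ fun k i j => ?_) hcform)
    show (v i * U j k) * (v j * U k i) = (U k i * v i) * (U k j * v j)
    rw [hU j k]; ring
  have hq13 : ∑ k, ∑ i, ∑ j, (v k * U i j) * (v j * U k i) = c := by
    refine (sum3_swap12 _).trans (.trans (tcongr _ _ fun k i j => ?_) hcform)
    show (v i * U k j) * (v j * U i k) = (U k i * v i) * (U k j * v j)
    rw [hU i k]; ring
  have hq23 : ∑ k, ∑ i, ∑ j, (v i * U j k) * (v j * U k i) = c :=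
    (sum3_rot _).trans hq12
  -- Q·R pairings
  have hm11 : ∑ k, ∑ i, ∑ j, (v k * U i j) * ((if i = j then (1:ℝ) else 0) * w k) = 0 := by
    have h2 : ∀ k i, ∑ j, (v k * U i j) * ((if i = j then (1:ℝ) else 0) * w k)
        = v k * U i i * w k := by
      intro k i
      simp only [mul_ite, ite_mul, one_mul, mul_one, mul_zero, zero_mul, Finset.sum_ite_eq,
        Finset.mem_univ, if_true]
    calc ∑ k, ∑ i, ∑ j, (v k * U i j) * ((if i = j then (1:ℝ) else 0) * w k)
        = ∑ k, ∑ i, v k * U i i * w k :=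
          Finset.sum_congr rfl fun k _ => Finset.sum_congr rfl fun i _ => h2 k i
      _ = ∑ k, (v k * w k) * ∑ i, U i i := by
          refine Finset.sum_congr rfl fun k _ => ?_
          rw [Finset.mul_sum]
          exact Finset.sum_congr rfl fun i _ => by ring
      _ = 0 := by
          rw [htrU]
          simp
  have hm22 : ∑ k, ∑ i, ∑ j, (v i * U j k) * ((if j = k then (1:ℝ) else 0) * w i) = 0 := by
    have h2 : ∀ k i, ∑ j, (v i * U j k) * ((if j = k then (1:ℝ) else 0) * w i)
        = v i * U k k * w i := by
      intro k i
      simp only [mul_ite, ite_mul, one_mul, mul_one, mul_zero, zero_mul, Finset.sum_ite_eq',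
        Finset.mem_univ, if_true]
    calc ∑ k, ∑ i, ∑ j, (v i * U j k) * ((if j = k then (1:ℝ) else 0) * w i)
        = ∑ k, ∑ i, v i * U k k * w i :=
          Finset.sum_congr rfl fun k _ => Finset.sum_congr rfl fun i _ => h2 k i
      _ = ∑ k, U k k * ∑ i, v i * w i := by
          refine Finset.sum_congr rfl fun k _ => ?_
          rw [Finset.mul_sum]
          exact Finset.sum_congr rfl fun i _ => by ring
      _ = (∑ k, U k k) * ∑ i, v i * w i := (Finset.sum_mul _ _ _).symm
      _ = 0 := by rw [htrU, zero_mul]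
  have hm33 : ∑ k, ∑ i, ∑ j, (v j * U k i) * ((if k = i then (1:ℝ) else 0) * w j) = 0 := by
    have h2 : ∀ k j, ∑ i, (v j * U k i) * ((if k = i then (1:ℝ) else 0) * w j)
        = v j * U k k * w j := by
      intro k j
      simp only [mul_ite, ite_mul, one_mul, mul_one, mul_zero, zero_mul, Finset.sum_ite_eq,
        Finset.mem_univ, if_true]
    calc ∑ k, ∑ i, ∑ j, (v j * U k i) * ((if k = i then (1:ℝ) else 0) * w j)
        = ∑ k, ∑ j, ∑ i, (v j * U k i) * ((if k = i then (1:ℝ) else 0) * w j) :=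
          Finset.sum_congr rfl fun k _ => Finset.sum_comm
      _ = ∑ k, ∑ j, v j * U k k * w j :=
          Finset.sum_congr rfl fun k _ => Finset.sum_congr rfl fun j _ => h2 k j
      _ = ∑ k, U k k * ∑ j, v j * w j := by
          refine Finset.sum_congr rfl fun k _ => ?_
          rw [Finset.mul_sum]
          exact Finset.sum_congr rfl fun j _ => by ring
      _ = (∑ k, U k k) * ∑ j, v j * w j := (Finset.sum_mul _ _ _).symm
      _ = 0 := by rw [htrU, zero_mul]
  have hm12 : ∑ k, ∑ i, ∑ j, (v k * U i j) * ((if j = k then (1:ℝ) else 0) * w i) = c := by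
    have h2 : ∀ k i, ∑ j, (v k * U i j) * ((if j = k then (1:ℝ) else 0) * w i)
        = v k * U i k * w i := by
      intro k i
      simp only [mul_ite, ite_mul, one_mul, mul_one, mul_zero, zero_mul, Finset.sum_ite_eq',
        Finset.mem_univ, if_true]
    calc ∑ k, ∑ i, ∑ j, (v k * U i j) * ((if j = k then (1:ℝ) else 0) * w i)
        = ∑ k, ∑ i, v k * U i k * w i :=
          Finset.sum_congr rfl fun k _ => Finset.sum_congr rfl fun i _ => h2 k i
      _ = ∑ k, ∑ i, U k i * v i * w k := by
          rw [Finset.sum_comm]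
          exact Finset.sum_congr rfl fun k _ => Finset.sum_congr rfl fun i _ => by ring
      _ = c := hcform2
  have hm13 : ∑ k, ∑ i, ∑ j, (v k * U i j) * ((if k = i then (1:ℝ) else 0) * w j) = c := by
    have h2 : ∀ k j, ∑ i, (v k * U i j) * ((if k = i then (1:ℝ) else 0) * w j)
        = v k * U k j * w j := by
      intro k j
      simp only [mul_ite, ite_mul, one_mul, mul_one, mul_zero, zero_mul, Finset.sum_ite_eq,
        Finset.mem_univ, if_true]
    calc ∑ k, ∑ i, ∑ j, (v k * U i j) * ((if k = i then (1:ℝ) else 0) * w j)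
        = ∑ k, ∑ j, ∑ i, (v k * U i j) * ((if k = i then (1:ℝ) else 0) * w j) :=
          Finset.sum_congr rfl fun k _ => Finset.sum_comm
      _ = ∑ k, ∑ j, v k * U k j * w j :=
          Finset.sum_congr rfl fun k _ => Finset.sum_congr rfl fun j _ => h2 k j
      _ = ∑ k, ∑ i, U k i * v i * w k := by
          rw [Finset.sum_comm]
          refine Finset.sum_congr rfl fun k _ => Finset.sum_congr rfl fun i _ => ?_
          rw [hU i k]; ring
      _ = c := hcform2
  have hm21 : ∑ k, ∑ i, ∑ j, (v i * U j k) * ((if i = j then (1:ℝ) else 0) * w k) = c := by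
    have h2 : ∀ k i, ∑ j, (v i * U j k) * ((if i = j then (1:ℝ) else 0) * w k)
        = v i * U i k * w k := by
      intro k i
      simp only [mul_ite, ite_mul, one_mul, mul_one, mul_zero, zero_mul, Finset.sum_ite_eq,
        Finset.mem_univ, if_true]
    calc ∑ k, ∑ i, ∑ j, (v i * U j k) * ((if i = j then (1:ℝ) else 0) * w k)
        = ∑ k, ∑ i, v i * U i k * w k :=
          Finset.sum_congr rfl fun k _ => Finset.sum_congr rfl fun i _ => h2 k i
      _ = ∑ k, ∑ i, U k i * v i * w k := by
          refine Finset.sum_congr rfl fun k _ => Finset.sum_congr rfl fun i _ => ?_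
          rw [hU i k]; ring
      _ = c := hcform2
  have hm23 : ∑ k, ∑ i, ∑ j, (v i * U j k) * ((if k = i then (1:ℝ) else 0) * w j) = c := by
    have h2 : ∀ k j, ∑ i, (v i * U j k) * ((if k = i then (1:ℝ) else 0) * w j)
        = v k * U j k * w j := by
      intro k j
      simp only [mul_ite, ite_mul, one_mul, mul_one, mul_zero, zero_mul, Finset.sum_ite_eq,
        Finset.mem_univ, if_true]
    calc ∑ k, ∑ i, ∑ j, (v i * U j k) * ((if k = i then (1:ℝ) else 0) * w j)
        = ∑ k, ∑ j, ∑ i, (v i * U j k) * ((if k = i then (1:ℝ) else 0) * w j) :=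
          Finset.sum_congr rfl fun k _ => Finset.sum_comm
      _ = ∑ k, ∑ j, v k * U j k * w j :=
          Finset.sum_congr rfl fun k _ => Finset.sum_congr rfl fun j _ => h2 k j
      _ = ∑ k, ∑ i, U k i * v i * w k := by
          rw [Finset.sum_comm]
          exact Finset.sum_congr rfl fun k _ => Finset.sum_congr rfl fun i _ => by ring
      _ = c := hcform2
  have hm31 : ∑ k, ∑ i, ∑ j, (v j * U k i) * ((if i = j then (1:ℝ) else 0) * w k) = c := by
    have h2 : ∀ k i, ∑ j, (v j * U k i) * ((if i = j then (1:ℝ) else 0) * w k)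
        = v i * U k i * w k := by
      intro k i
      simp only [mul_ite, ite_mul, one_mul, mul_one, mul_zero, zero_mul, Finset.sum_ite_eq,
        Finset.mem_univ, if_true]
    calc ∑ k, ∑ i, ∑ j, (v j * U k i) * ((if i = j then (1:ℝ) else 0) * w k)
        = ∑ k, ∑ i, v i * U k i * w k :=
          Finset.sum_congr rfl fun k _ => Finset.sum_congr rfl fun i _ => h2 k i
      _ = ∑ k, ∑ i, U k i * v i * w k :=
          Finset.sum_congr rfl fun k _ => Finset.sum_congr rfl fun i _ => by ring
      _ = c := hcform2
  have hm32 : ∑ k, ∑ i, ∑ j, (v j * U k i) * ((if j = k then (1:ℝ) else 0) * w i) = c := by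
    have h2 : ∀ k i, ∑ j, (v j * U k i) * ((if j = k then (1:ℝ) else 0) * w i)
        = v k * U k i * w i := by
      intro k i
      simp only [mul_ite, ite_mul, one_mul, mul_one, mul_zero, zero_mul, Finset.sum_ite_eq',
        Finset.mem_univ, if_true]
    calc ∑ k, ∑ i, ∑ j, (v j * U k i) * ((if j = k then (1:ℝ) else 0) * w i)
        = ∑ k, ∑ i, v k * U k i * w i :=
          Finset.sum_congr rfl fun k _ => Finset.sum_congr rfl fun i _ => h2 k i
      _ = ∑ k, ∑ i, U k i * v i * w k := by
          rw [Finset.sum_comm]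
          refine Finset.sum_congr rfl fun k _ => Finset.sum_congr rfl fun i _ => ?_
          rw [hU i k]; ring
      _ = c := hcform2
  -- R·R pairings
  have hNcount : ∀ x : ℝ, ∑ _k : Fin n, x = N * x := by
    intro x
    rw [Finset.sum_const, Finset.card_univ, Fintype.card_fin, nsmul_eq_mul]
  have hk11 : ∑ k : Fin n, ∑ i : Fin n, ∑ j : Fin n, ((if i = j then (1:ℝ) else 0) * w k)^2 = N * c := by
    have h2 : ∀ k i j : Fin n, ((if i = j then (1:ℝ) else 0) * w k)^2
      = if i = j then w k ^2 else 0 := fun k i j => by split_ifs <;> ring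
    rw [tcongr _ _ h2]
    simp only [Finset.sum_ite_eq, Finset.mem_univ, if_true]
    calc ∑ k, ∑ _i : Fin n, w k ^2 = ∑ k, N * w k ^2 :=
          Finset.sum_congr rfl fun k _ => hNcount _
      _ = N * c := by rw [← Finset.mul_sum, hc]
  have hk22 : ∑ k : Fin n, ∑ i : Fin n, ∑ j : Fin n, ((if j = k then (1:ℝ) else 0) * w i)^2 = N * c := by
    have h2 : ∀ k i j : Fin n, ((if j = k then (1:ℝ) else 0) * w i)^2
      = if j = k then w i ^2 else 0 := fun k i j => by split_ifs <;> ring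
    rw [tcongr _ _ h2]
    simp only [Finset.sum_ite_eq', Finset.mem_univ, if_true]
    calc ∑ _k : Fin n, ∑ i, w i ^2 = ∑ _k : Fin n, c :=
          Finset.sum_congr rfl fun k _ => hc.symm
      _ = N * c := hNcount _
  have hk33 : ∑ k : Fin n, ∑ i : Fin n, ∑ j : Fin n, ((if k = i then (1:ℝ) else 0) * w j)^2 = N * c :=
    (sum3_rot _).trans hk22
  have hk12 : ∑ k : Fin n, ∑ i : Fin n, ∑ j : Fin n, ((if i = j then (1:ℝ) else 0) * w k) *
      ((if j = k then (1:ℝ) else 0) * w i) = c := by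
    have h2 : ∀ k i j : Fin n, ((if i = j then (1:ℝ) else 0) * w k) *
      ((if j = k then (1:ℝ) else 0) * w i)
      = if i = j then (if j = k then w k * w i else 0) else 0 := fun k i j => by split_ifs <;> ring
    rw [tcongr _ _ h2]
    simp only [Finset.sum_ite_eq, Finset.sum_ite_eq', Finset.mem_univ, if_true]
    rw [hc]
    exact Finset.sum_congr rfl fun k _ => (pow_two (w k)).symm
  have hk13 : ∑ k : Fin n, ∑ i : Fin n, ∑ j : Fin n, ((if i = j then (1:ℝ) else 0) * w k) *
      ((if k = i then (1:ℝ) else 0) * w j) = c := by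
    have h2 : ∀ k i j : Fin n, ((if i = j then (1:ℝ) else 0) * w k) *
      ((if k = i then (1:ℝ) else 0) * w j)
      = if i = j then (if k = i then w k * w j else 0) else 0 := fun k i j => by split_ifs <;> ring
    rw [tcongr _ _ h2]
    simp only [Finset.sum_ite_eq, Finset.sum_ite_eq', Finset.mem_univ, if_true]
    rw [hc]
    exact Finset.sum_congr rfl fun k _ => (pow_two (w k)).symm
  have hk23 : ∑ k : Fin n, ∑ i : Fin n, ∑ j : Fin n, ((if j = k then (1:ℝ) else 0) * w i) *
      ((if k = i then (1:ℝ) else 0) * w j) = c := by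
    have h2 : ∀ k i j : Fin n, ((if j = k then (1:ℝ) else 0) * w i) *
      ((if k = i then (1:ℝ) else 0) * w j)
      = if j = k then (if k = i then w i * w j else 0) else 0 := fun k i j => by split_ifs <;> ring
    rw [tcongr _ _ h2]
    simp only [Finset.sum_ite_eq, Finset.sum_ite_eq', Finset.mem_univ, if_true]
    rw [hc]
    exact Finset.sum_congr rfl fun k _ => (pow_two (w k)).symm
  -- the comparison tensor
  obtain ⟨P, hP⟩ : ∃ P : Fin n → Fin n → Fin n → ℝ, ∀ k i j, P k i j =
      (N+2) * (v k * U i j) + (N+2) * (v i * U j k) + (N+2) * (v j * U k i)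
      - 2*((if i = j then (1:ℝ) else 0) * w k) - 2*((if j = k then (1:ℝ) else 0) * w i)
      - 2*((if k = i then (1:ℝ) else 0) * w j) := ⟨_, fun _ _ _ => rfl⟩
  have hSP : ∑ k, ∑ i, ∑ j, S k i j * P k i j = 3*(N+2)*a := by
    have h2 : ∀ k i j, S k i j * P k i j =
        (N+2) * (S k i j * (v k * U i j)) + (N+2) * (S k i j * (v i * U j k))
        + (N+2) * (S k i j * (v j * U k i))
        - 2 * (S k i j * ((if i = j then (1:ℝ) else 0) * w k))
        - 2 * (S k i j * ((if j = k then (1:ℝ) else 0) * w i))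
        - 2 * (S k i j * ((if k = i then (1:ℝ) else 0) * w j)) := fun k i j => by
      rw [hP]; ring
    rw [tcongr _ _ h2]
    simp only [Finset.sum_add_distrib, Finset.sum_sub_distrib, ← Finset.mul_sum]
    rw [hq1, hq2, hq3, hr1, hr2, hr3]
    ring
  have hPP : ∑ k, ∑ i, ∑ j, (P k i j)^2 = 3*(N+2)^2*a + 6*N*(N+2)*c := by
    have h2 : ∀ k i j, (P k i j)^2 =
        (N+2)^2 * ((v k * U i j)^2) + (N+2)^2 * ((v i * U j k)^2) + (N+2)^2 * ((v j * U k i)^2)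
        + (2*(N+2)^2) * ((v k * U i j) * (v i * U j k))
        + (2*(N+2)^2) * ((v k * U i j) * (v j * U k i))
        + (2*(N+2)^2) * ((v i * U j k) * (v j * U k i))
        - (4*(N+2)) * ((v k * U i j) * ((if i = j then (1:ℝ) else 0) * w k))
        - (4*(N+2)) * ((v k * U i j) * ((if j = k then (1:ℝ) else 0) * w i))
        - (4*(N+2)) * ((v k * U i j) * ((if k = i then (1:ℝ) else 0) * w j))
        - (4*(N+2)) * ((v i * U j k) * ((if i = j then (1:ℝ) else 0) * w k))
        - (4*(N+2)) * ((v i * U j k) * ((if j = k then (1:ℝ) else 0) * w i))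
        - (4*(N+2)) * ((v i * U j k) * ((if k = i then (1:ℝ) else 0) * w j))
        - (4*(N+2)) * ((v j * U k i) * ((if i = j then (1:ℝ) else 0) * w k))
        - (4*(N+2)) * ((v j * U k i) * ((if j = k then (1:ℝ) else 0) * w i))
        - (4*(N+2)) * ((v j * U k i) * ((if k = i then (1:ℝ) else 0) * w j))
        + 4 * (((if i = j then (1:ℝ) else 0) * w k)^2)
        + 4 * (((if j = k then (1:ℝ) else 0) * w i)^2)
        + 4 * (((if k = i then (1:ℝ) else 0) * w j)^2)
        + 8 * (((if i = j then (1:ℝ) else 0) * w k) * ((if j = k then (1:ℝ) else 0) * w i))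
        + 8 * (((if i = j then (1:ℝ) else 0) * w k) * ((if k = i then (1:ℝ) else 0) * w j))
        + 8 * (((if j = k then (1:ℝ) else 0) * w i) * ((if k = i then (1:ℝ) else 0) * w j)) :=
      fun k i j => by rw [hP]; ring
    rw [tcongr _ _ h2]
    simp only [Finset.sum_add_distrib, Finset.sum_sub_distrib, ← Finset.mul_sum]
    rw [hq11, hq22, hq33, hq12, hq13, hq23, hm11, hm12, hm13, hm21, hm22, hm23, hm31, hm32,
      hm33, hk11, hk22, hk33, hk12, hk13, hk23]
    ring
  -- key positivity
  have key : (0:ℝ) ≤ 9*N^2*sS - 6*N*(3*(N+2)*a) + (3*(N+2)^2*a + 6*N*(N+2)*c) := by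
    have h0 : (0:ℝ) ≤ ∑ k, ∑ i, ∑ j, (3*N*S k i j - P k i j)^2 :=
      Finset.sum_nonneg fun k _ => Finset.sum_nonneg fun i _ => Finset.sum_nonneg fun j _ =>
        sq_nonneg _
    have h2 : ∀ k i j, (3*N*S k i j - P k i j)^2 =
        (9*N^2) * ((S k i j)^2) - (6*N) * (S k i j * P k i j) + (P k i j)^2 := fun k i j => by
      ring
    rw [tcongr _ _ h2] at h0
    simp only [Finset.sum_add_distrib, Finset.sum_sub_distrib, ← Finset.mul_sum] at h0
    rwa [hSP, hPP, ← hsS] at h0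
  -- spectral bound
  have hcop : N * c ≤ (N - 1) * a := by
    have h := hop v
    have h3 : ∑ k, (∑ i, U k i * v i)^2 = c := by
      rw [hc]
      exact Finset.sum_congr rfl fun k _ => by rw [hw k]
    rw [h3, ← ha] at h
    exact h
  -- conclusion
  have hgoal : ∑ k, (∑ i, ∑ j, S k i j * U i j)^2 = a := by
    rw [ha]
    exact Finset.sum_congr rfl fun k _ => by rw [hv k]
  rw [hgoal, ← hsS]
  have hNpos : (0:ℝ) < N := by linarith
  have hN2pos : (0:ℝ) < N + 2 := by linarith
  rw [div_mul_eq_mul_div, le_div_iff₀ hN2pos]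
  have h1 : (N+2)*(N*c) ≤ (N+2)*((N-1)*a) := by
    exact mul_le_mul_of_nonneg_left hcop hN2pos.le
  have key2 : 9*N*((N+2)*a) ≤ 9*N*(N*sS) := by linarith [key, h1]
  have hlt : (0:ℝ) < 9*N := by linarith
  have key3 := le_of_mul_le_mul_left key2 hlt
  linarith [key3]


/-- Pointwise algebraic content of the refined Kato inequality for trace-free Codazzi tensors:
if `S` is a totally symmetric trace-free 3-tensor and `U` is a trace-free symmetric matrix of
Frobenius norm 1, then `∑_k ⟨S_k, U⟩² ≤ (n/(n+2))·‖S‖²`. -/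
theorem refined_kato_algebraic {n : ℕ} (hn : 2 ≤ n)
    (S : Fin n → Fin n → Fin n → ℝ)
    (hS₁ : ∀ k i j, S k i j = S i k j)
    (hS₂ : ∀ k i j, S k i j = S k j i)
    (htrS : ∀ k, ∑ i, S k i i = 0)
    (U : Matrix (Fin n) (Fin n) ℝ) (hU : U.IsSymm) (htrU : U.trace = 0)
    (hnorm : Real.sqrt (∑ i, ∑ j, (U i j) ^ 2) = 1) :
    ∑ k, (∑ i, ∑ j, S k i j * U i j) ^ 2 ≤
      ((n : ℝ) / ((n : ℝ) + 2)) * ∑ k, ∑ i, ∑ j, (S k i j) ^ 2 := by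
  have hfro : ∑ i, ∑ j, (U i j)^2 = 1 := by
    have h0 : (0:ℝ) ≤ ∑ i, ∑ j, (U i j)^2 :=
      Finset.sum_nonneg fun i _ => Finset.sum_nonneg fun j _ => sq_nonneg _
    nlinarith [Real.sq_sqrt h0, hnorm]
  have htrU' : ∑ i, U i i = 0 := by simpa [Matrix.trace, Matrix.diag] using htrU
  have hU' : ∀ i j, U i j = U j i := fun i j => hU.apply j i
  have hNpos : (0:ℝ) < (n:ℝ) := by
    have : (0:ℕ) < n := lt_of_lt_of_le (by norm_num) hn
    exact_mod_cast this
  have hop : ∀ v : Fin n → ℝ,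
      (n:ℝ) * ∑ k, (∑ i, U k i * v i)^2 ≤ ((n:ℝ)-1) * ∑ k, (v k)^2 := by
    intro v
    have h := opbound hn U hU htrU hfro v
    have h2 : ∑ k, ((U *ᵥ v) k)^2 = ∑ k, (∑ i, U k i * v i)^2 :=
      Finset.sum_congr rfl fun k _ => rfl
    rw [h2] at h
    have h3 := mul_le_mul_of_nonneg_left h hNpos.le
    calc (n:ℝ) * ∑ k, (∑ i, U k i * v i)^2
        ≤ (n:ℝ) * ((((n:ℝ)-1))/(n:ℝ) * ∑ k, (v k)^2) := h3
      _ = ((n:ℝ)-1) * ∑ k, (v k)^2 := by field_simp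
  exact kato_core hn S hS₁ hS₂ htrS (fun i j => U i j) hU' htrU' hfro hop
end

section
/- Let S : Fin 2 → Fin 2 → Fin 2 → ℝ be totally symmetric (invariant under all permutations of its three indices) and trace-free, i.e. ∑_i S(k,i,i) = 0 for every k. Let U be a real symmetric 2×2 matrix with trace(U) = 0 and Frobenius norm ‖U‖ = 1. Then equality holds in the refined Kato inequality: ∑_k ( ∑_{i,j} S(k,i,j)·U_{ij} )² = (1/2) · ∑_{k,i,j} S(k,i,j)². -/
/-- For `n = 2`, equality holds in the refined Kato inequality: if `S` is a totally symmetric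
trace-free 3-tensor on `Fin 2` and `U` is a trace-free symmetric `2 × 2` matrix of Frobenius
norm 1, then `∑_k ⟨S_k, U⟩² = (1/2)·‖S‖²`. -/
theorem refined_kato_equality_dim_two
    (S : Fin 2 → Fin 2 → Fin 2 → ℝ)
    (hS₁ : ∀ k i j, S k i j = S i k j)
    (hS₂ : ∀ k i j, S k i j = S k j i)
    (htrS : ∀ k, ∑ i, S k i i = 0)
    (U : Matrix (Fin 2) (Fin 2) ℝ) (hU : U.IsSymm) (htrU : U.trace = 0)
    (hnorm : Real.sqrt (∑ i, ∑ j, (U i j) ^ 2) = 1) :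
    ∑ k, (∑ i, ∑ j, S k i j * U i j) ^ 2 =
      (1 / 2 : ℝ) * ∑ k, ∑ i, ∑ j, (S k i j) ^ 2 := by
  have hsum : (∑ i, ∑ j, (U i j) ^ 2) = 1 := by
    have hnn : (0:ℝ) ≤ ∑ i, ∑ j, (U i j) ^ 2 := by positivity
    nlinarith [Real.sq_sqrt hnn, hnorm]
  have hU10 : U 1 0 = U 0 1 := hU.apply 0 1
  have hU11 : U 1 1 = - U 0 0 := by
    have := htrU
    rw [Matrix.trace_fin_two] at this
    linarith
  have h0 := htrS 0
  have h1 := htrS 1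
  simp [Fin.sum_univ_two] at h0 h1 hsum ⊢
  have e1 : S 0 1 1 = - S 0 0 0 := by linarith
  have e2 : S 1 0 0 = S 0 0 1 := by rw [hS₁ 1 0 0, hS₂ 0 1 0]
  have e3 : S 1 1 1 = - S 0 0 1 := by
    have := e2; linarith
  have e4 : S 0 1 0 = S 0 0 1 := hS₂ 0 1 0
  have e5 : S 1 0 1 = S 0 1 1 := hS₁ 1 0 1
  have e6 : S 1 1 0 = S 0 1 1 := by rw [hS₂ 1 1 0, hS₁ 1 0 1]
  rw [hU10, hU11] at hsum
  rw [e1, e2, e3, e4, e5, e6, e1, hU10, hU11]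
  linear_combination (2 * (S 0 0 0 ^ 2 + S 0 0 1 ^ 2)) * hsum
end

section
/- Let Ω ⊆ ℝⁿ be open (n ≥ 2) and let T : Ω → (real symmetric n×n matrices) be differentiable, with trace(T(x)) = 0 for all x ∈ Ω, and satisfying the Codazzi equation ∂_k T_{ij} = ∂_j T_{ik} on Ω for all indices i, j, k. Then at every point x ∈ Ω with T(x) ≠ 0 the refined Kato inequality holds: ∑_{k,i,j} (∂_k T_{ij}(x))² ≥ ((n+2)/n) · ∑_k ( ∑_{i,j} ∂_k T_{ij}(x) · T_{ij}(x) / ‖T(x)‖ )², where ‖T(x)‖ = √(∑_{i,j} T_{ij}(x)²); equivalently, |∇T|² ≥ ((n+2)/n)·|∇‖T‖|² at x, since ∂_k ‖T‖ = ⟨∂_k T, T⟩/‖T‖ where T ≠ 0. -/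
open Finset

section helpers

variable {n : ℕ}

private lemma kato_eq_zero_of_sum_sq (f : Fin n → ℝ) (h : ∑ i, (f i)^2 = 0) (i : Fin n) :
    f i = 0 := by
  have h2 := (Finset.sum_eq_zero_iff_of_nonneg (fun j _ => sq_nonneg (f j))).1 h i (mem_univ i)
  exact pow_eq_zero_iff two_ne_zero |>.mp h2

private lemma kato_cs2 (f g : Fin n → Fin n → ℝ) :
    (∑ i, ∑ j, f i j * g i j)^2 ≤ (∑ i, ∑ j, (f i j)^2) * (∑ i, ∑ j, (g i j)^2) := by
  have h := Finset.sum_mul_sq_le_sq_mul_sq (univ : Finset (Fin n × Fin n))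
    (fun p => f p.1 p.2) (fun p => g p.1 p.2)
  simpa [Fintype.sum_prod_type] using h

private lemma kato_lem1 (hn : 2 ≤ n) (t : Fin n → Fin n → ℝ) (v w : Fin n → ℝ)
    (ht : ∀ i j, t i j = t j i) (htr : ∑ i, t i i = 0)
    (hw : ∀ k, w k = ∑ j, t k j * v j) :
    (n : ℝ) * ∑ k, (w k)^2 ≤
      ((n : ℝ) - 1) * (∑ i, ∑ j, (t i j)^2) * ∑ k, (v k)^2 := by
  have hn2 : (2:ℝ) ≤ (n:ℝ) := by exact_mod_cast hn
  set s := ∑ i, ∑ j, (t i j)^2 with hs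
  set q := ∑ k, (v k)^2 with hq
  have hq0 : (0:ℝ) ≤ q := Finset.sum_nonneg fun _ _ => sq_nonneg _
  rcases eq_or_lt_of_le hq0 with hq' | hq'
  · have hv0 : ∀ k, v k = 0 := by
      apply kato_eq_zero_of_sum_sq
      rw [← hq]; exact hq'.symm
    have hw0 : ∀ k, w k = 0 := fun k => by rw [hw k]; simp [hv0]
    have h1 : ∑ k, (w k)^2 = 0 := by simp [hw0]
    rw [h1, ← hq']
    simp
  · set a := ∑ k, v k * w k with ha
    set b : Fin n → ℝ := fun k => q * w k - a * v k with hb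
    set R : Fin n → Fin n → ℝ :=
      fun i j => q^2 * t i j - a * (v i * v j) - (v i * b j + b i * v j) with hR
    set β := ∑ k, (b k)^2 with hβ
    set SR := ∑ i, ∑ j, (R i j)^2 with hSR
    set W := ∑ k, (w k)^2 with hW0
    have hβ0 : (0:ℝ) ≤ β := Finset.sum_nonneg fun _ _ => sq_nonneg _
    have hSR0 : (0:ℝ) ≤ SR :=
      Finset.sum_nonneg fun _ _ => Finset.sum_nonneg fun _ _ => sq_nonneg _
    -- b ⊥ v
    have hbv : ∑ k, b k * v k = 0 := by
      calc ∑ k, b k * v k = ∑ k, (q * (v k * w k) - a * (v k)^2) :=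
            Finset.sum_congr rfl fun k _ => by simp only [hb]; ring
        _ = q * (∑ k, v k * w k) - a * ∑ k, (v k)^2 := by
            rw [Finset.sum_sub_distrib, Finset.mul_sum, Finset.mul_sum]
        _ = 0 := by rw [← ha, ← hq]; ring
    have hvb : ∑ k, v k * b k = 0 := by
      rw [Finset.sum_congr rfl fun k _ => mul_comm (v k) (b k)]; exact hbv
    -- R v = 0
    have hRv : ∀ i, ∑ j, R i j * v j = 0 := by
      intro i
      calc ∑ j, R i j * v j
          = ∑ j, (q^2 * (t i j * v j) - (a * v i) * (v j)^2
              - (v i * (b j * v j) + b i * (v j)^2)) :=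
            Finset.sum_congr rfl fun j _ => by simp only [hR]; ring
        _ = q^2 * (∑ j, t i j * v j) - (a * v i) * (∑ j, (v j)^2)
              - (v i * (∑ j, b j * v j) + b i * (∑ j, (v j)^2)) := by
            rw [Finset.sum_sub_distrib, Finset.sum_sub_distrib, Finset.sum_add_distrib,
              ← Finset.mul_sum, ← Finset.mul_sum, ← Finset.mul_sum, ← Finset.mul_sum]
        _ = 0 := by rw [hbv, ← hw i, ← hq]; simp only [hb]; ring
    have hRsym : ∀ i j, R i j = R j i := fun i j => by
      simp only [hR]; rw [ht i j]; ring
    have hRv' : ∀ j, ∑ i, R i j * v i = 0 := by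
      intro j
      calc ∑ i, R i j * v i = ∑ i, R j i * v i :=
            Finset.sum_congr rfl fun i _ => by rw [hRsym i j]
        _ = 0 := hRv j
    -- trace of R
    have htrR : ∑ i, R i i = -(a * q) := by
      calc ∑ i, R i i = ∑ i, (q^2 * t i i - a * (v i)^2 - 2 * (b i * v i)) :=
            Finset.sum_congr rfl fun i _ => by simp only [hR]; ring
        _ = q^2 * (∑ i, t i i) - a * (∑ i, (v i)^2) - 2 * ∑ i, b i * v i := by
            rw [Finset.sum_sub_distrib, Finset.sum_sub_distrib,
              Finset.mul_sum, Finset.mul_sum, Finset.mul_sum]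
        _ = -(a * q) := by rw [htr, hbv, ← hq]; ring
    -- Cauchy–Schwarz with the projector q·δ - v⊗v
    have hPP : ∑ i, ∑ j, (q * (if i = j then (1:ℝ) else 0) - v i * v j)^2
        = ((n:ℝ) - 1) * q^2 := by
      have inner : ∀ i, ∑ j, (q * (if i = j then (1:ℝ) else 0) - v i * v j)^2
          = q^2 - 2*q*((v i)^2) + (v i)^2 * q := by
        intro i
        calc ∑ j, (q * (if i = j then (1:ℝ) else 0) - v i * v j)^2
            = ∑ j, ((if i = j then q^2 else 0) - (if i = j then 2*q*(v i * v j) else 0)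
                + (v i)^2 * (v j)^2) :=
              Finset.sum_congr rfl fun j _ => by
                by_cases h : i = j
                · rw [if_pos h, if_pos h, if_pos h, h]; ring
                · rw [if_neg h, if_neg h, if_neg h]; ring
          _ = q^2 - 2*q*((v i)^2) + (v i)^2 * q := by
              rw [Finset.sum_add_distrib, Finset.sum_sub_distrib,
                Finset.sum_ite_eq, Finset.sum_ite_eq, ← Finset.mul_sum, ← hq]
              simp only [Finset.mem_univ, if_true]; ring
      rw [Finset.sum_congr rfl fun i _ => inner i]
      rw [Finset.sum_add_distrib, Finset.sum_sub_distrib, Finset.sum_const,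
        ← Finset.mul_sum, ← Finset.sum_mul, ← hq]
      simp only [card_univ, Fintype.card_fin, nsmul_eq_mul]
      ring
    have hRP : ∑ i, ∑ j, R i j * (q * (if i = j then (1:ℝ) else 0) - v i * v j)
        = -(a * q^2) := by
      have inner : ∀ i, ∑ j, R i j * (q * (if i = j then (1:ℝ) else 0) - v i * v j)
          = q * R i i := by
        intro i
        calc ∑ j, R i j * (q * (if i = j then (1:ℝ) else 0) - v i * v j)
            = ∑ j, ((if i = j then q * R i j else 0) - v i * (R i j * v j)) :=
              Finset.sum_congr rfl fun j _ => by
                by_cases h : i = j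
                · rw [if_pos h, if_pos h, h]; ring
                · rw [if_neg h, if_neg h]; ring
          _ = q * R i i - v i * ∑ j, R i j * v j := by
              rw [Finset.sum_sub_distrib, Finset.sum_ite_eq, ← Finset.mul_sum]
              simp only [Finset.mem_univ, if_true]
          _ = q * R i i := by rw [hRv i]; ring
      rw [Finset.sum_congr rfl fun i _ => inner i, ← Finset.mul_sum, htrR]; ring
    have h4 : a^2*q^2 ≤ ((n:ℝ)-1) * SR := by
      have hcs := kato_cs2 R (fun i j => q * (if i = j then (1:ℝ) else 0) - v i * v j)
      rw [hRP, hPP, ← hSR] at hcs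
      have hq2 : (0:ℝ) < q^2 := pow_pos hq' 2
      have : (a*q^2)^2 ≤ SR * (((n:ℝ)-1)*q^2) := by rw [← neg_sq (a*q^2)]; simpa using hcs
      nlinarith [this, hq2]
    -- norm decomposition
    have hexp : q^4 * s = SR + a^2*q^2 + 2*q*β := by
      have hB : (∑ i, ∑ j, (a*(v i)^2) * (a*(v j)^2)) = a^2*q^2 := by
        rw [← Finset.sum_mul_sum]
        have h1 : ∑ k, a*(v k)^2 = a*q := by rw [← Finset.mul_sum, ← hq]
        rw [h1]; ring
      have hC1 : (∑ i, ∑ j, (v i)^2 * (b j)^2) = q*β := by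
        rw [← Finset.sum_mul_sum, ← hq, ← hβ]
      have hC2 : (∑ i, ∑ j, (b i)^2 * (v j)^2) = β*q := by
        rw [← Finset.sum_mul_sum, ← hq, ← hβ]
      have hC3 : (∑ i, ∑ j, (2*(v i * b i)) * (v j * b j)) = 0 := by
        rw [← Finset.sum_mul_sum, hvb, mul_zero]
      have hD : (∑ i, ∑ j, (2*a*(v i)) * (R i j * v j)) = 0 := by
        rw [Finset.sum_eq_zero]
        intro i _
        rw [← Finset.mul_sum, hRv i, mul_zero]
      have hE : (∑ i, ∑ j, (2*(b i)) * (R i j * v j)) = 0 := by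
        rw [Finset.sum_eq_zero]
        intro i _
        rw [← Finset.mul_sum, hRv i, mul_zero]
      have hF : (∑ i, ∑ j, (R i j * v i) * (2*(b j))) = 0 := by
        rw [Finset.sum_comm, Finset.sum_eq_zero]
        intro j _
        rw [← Finset.sum_mul, hRv' j, zero_mul]
      have hG : (∑ i, ∑ j, ((2*a)*(v i)^2) * (v j * b j)) = 0 := by
        rw [← Finset.sum_mul_sum, hvb, mul_zero]
      have hH : (∑ i, ∑ j, (v i * b i) * ((2*a)*(v j)^2)) = 0 := by
        rw [← Finset.sum_mul_sum, hvb, zero_mul]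
      calc q^4 * s = ∑ i, ∑ j, (q^2 * t i j)^2 := by
            rw [hs, Finset.mul_sum]
            exact Finset.sum_congr rfl fun i _ => by
              rw [Finset.mul_sum]
              exact Finset.sum_congr rfl fun j _ => by ring
        _ = ∑ i, ∑ j, ((R i j)^2 + (a*(v i)^2) * (a*(v j)^2)
              + ((v i)^2 * (b j)^2 + (b i)^2 * (v j)^2 + (2*(v i * b i)) * (v j * b j))
              + (2*a*(v i)) * (R i j * v j) + (2*(b i)) * (R i j * v j)
              + (R i j * v i) * (2*(b j))
              + ((2*a)*(v i)^2) * (v j * b j) + (v i * b i) * ((2*a)*(v j)^2)) :=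
            Finset.sum_congr rfl fun i _ => Finset.sum_congr rfl fun j _ => by
              simp only [hR]; ring
        _ = SR + a^2*q^2 + 2*q*β := by
            simp only [Finset.sum_add_distrib]
            rw [hB, hC1, hC2, hC3, hD, hE, hF, hG, hH, ← hSR]
            ring
    -- |w|²
    have hWq : q^2 * W = a^2*q + β := by
      calc q^2 * W = ∑ k, (q * w k)^2 := by
            rw [hW0, Finset.mul_sum]
            exact Finset.sum_congr rfl fun k _ => by ring
        _ = ∑ k, (a^2*(v k)^2 + (2*a)*(v k * b k) + (b k)^2) :=
            Finset.sum_congr rfl fun k _ => by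
              have : q * w k = a * v k + b k := by simp only [hb]; ring
              rw [this]; ring
        _ = a^2*q + β := by
            rw [Finset.sum_add_distrib, Finset.sum_add_distrib,
              ← Finset.mul_sum, ← Finset.mul_sum, ← hq, ← hβ, hvb]
            ring
    -- final arithmetic
    have goal' : (n:ℝ)*W*q^4 ≤ ((n:ℝ)-1)*s*q*q^4 := by
      have e1 : (n:ℝ)*W*q^4 = (n:ℝ)*q^2*(a^2*q+β) := by rw [← hWq]; ring
      have e2 : ((n:ℝ)-1)*s*q*q^4 = ((n:ℝ)-1)*q*(SR + a^2*q^2 + 2*q*β) := by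
        rw [← hexp]; ring
      rw [e1, e2]
      have h5 : q*(a^2*q^2) ≤ q*(((n:ℝ)-1)*SR) := by
        apply mul_le_mul_of_nonneg_left h4 hq'.le
      have h6 : (0:ℝ) ≤ ((n:ℝ)-2) * (q^2*β) :=
        mul_nonneg (by linarith) (mul_nonneg (sq_nonneg q) hβ0)
      nlinarith [h5, h6]
    exact le_of_mul_le_mul_right goal' (pow_pos hq' 4)

end helpers
section lemB
variable {n : ℕ}

private lemma kato_sum3_swap12 (f : Fin n → Fin n → Fin n → ℝ) :
    ∑ k, ∑ i, ∑ j, f k i j = ∑ k, ∑ i, ∑ j, f i k j :=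
  Finset.sum_comm

private lemma kato_sum3_swap23 (f : Fin n → Fin n → Fin n → ℝ) :
    ∑ k, ∑ i, ∑ j, f k i j = ∑ k, ∑ i, ∑ j, f k j i :=
  Finset.sum_congr rfl fun _ _ => Finset.sum_comm

private lemma kato_sum3_swap13 (f : Fin n → Fin n → Fin n → ℝ) :
    ∑ k, ∑ i, ∑ j, f k i j = ∑ k, ∑ i, ∑ j, f j i k := by
  rw [kato_sum3_swap12, kato_sum3_swap23, kato_sum3_swap12]

private lemma kato_sum3_rot (f : Fin n → Fin n → Fin n → ℝ) :
    ∑ k, ∑ i, ∑ j, f k i j = ∑ j, ∑ k, ∑ i, f k i j := by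
  rw [kato_sum3_swap23 f]
  exact Finset.sum_comm

private lemma kato_cs3 (f g : Fin n → Fin n → Fin n → ℝ) :
    (∑ k, ∑ i, ∑ j, f k i j * g k i j)^2 ≤
      (∑ k, ∑ i, ∑ j, (f k i j)^2) * (∑ k, ∑ i, ∑ j, (g k i j)^2) := by
  have h := Finset.sum_mul_sq_le_sq_mul_sq (univ : Finset (Fin n × Fin n × Fin n))
    (fun p => f p.1 p.2.1 p.2.2) (fun p => g p.1 p.2.1 p.2.2)
  simpa [Fintype.sum_prod_type] using h

private lemma kato_Y1 (D : Fin n → Fin n → Fin n → ℝ) (w : Fin n → ℝ)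
    (hDtr : ∀ k, ∑ i, D k i i = 0) :
    ∑ k, ∑ i, ∑ j, D k i j * (if i = j then w k else 0) = 0 := by
  apply Finset.sum_eq_zero
  intro k _
  have e : ∀ i, ∑ j, D k i j * (if i = j then w k else 0) = D k i i * w k := by
    intro i
    calc ∑ j, D k i j * (if i = j then w k else 0)
        = ∑ j, (if i = j then D k i j * w k else 0) :=
          Finset.sum_congr rfl fun j _ => by
            by_cases h : i = j
            · rw [if_pos h, if_pos h]
            · rw [if_neg h, if_neg h, mul_zero]
      _ = D k i i * w k := by rw [Finset.sum_ite_eq]; simp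
  rw [Finset.sum_congr rfl fun i _ => e i, ← Finset.sum_mul, hDtr k, zero_mul]

private lemma kato_Y2 (D : Fin n → Fin n → Fin n → ℝ) (w : Fin n → ℝ)
    (hD12 : ∀ k i j, D k i j = D i k j)
    (hDtr : ∀ k, ∑ i, D k i i = 0) :
    ∑ k, ∑ i, ∑ j, D k i j * (if j = k then w i else 0) = 0 := by
  have e : ∀ k i, ∑ j, D k i j * (if j = k then w i else 0) = D k i k * w i := by
    intro k i
    calc ∑ j, D k i j * (if j = k then w i else 0)
        = ∑ j, (if j = k then D k i j * w i else 0) :=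
          Finset.sum_congr rfl fun j _ => by
            by_cases h : j = k
            · rw [if_pos h, if_pos h]
            · rw [if_neg h, if_neg h, mul_zero]
      _ = D k i k * w i := by rw [Finset.sum_ite_eq']; simp
  rw [Finset.sum_congr rfl fun k _ => Finset.sum_congr rfl fun i _ => e k i]
  rw [Finset.sum_comm]
  apply Finset.sum_eq_zero
  intro i _
  have e2 : ∀ k, D k i k * w i = D i k k * w i := fun k => by rw [hD12 k i k]
  rw [Finset.sum_congr rfl fun k _ => e2 k, ← Finset.sum_mul, hDtr i, zero_mul]

private lemma kato_Y3 (D : Fin n → Fin n → Fin n → ℝ) (w : Fin n → ℝ)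
    (hD13 : ∀ k i j, D k i j = D j i k)
    (hDtr : ∀ k, ∑ i, D k i i = 0) :
    ∑ k, ∑ i, ∑ j, D k i j * (if k = i then w j else 0) = 0 := by
  rw [kato_sum3_rot (fun k i j => D k i j * (if k = i then w j else 0))]
  apply Finset.sum_eq_zero
  intro j _
  have e : ∀ k, ∑ i, D k i j * (if k = i then w j else 0) = D k k j * w j := by
    intro k
    calc ∑ i, D k i j * (if k = i then w j else 0)
        = ∑ i, (if k = i then D k i j * w j else 0) :=
          Finset.sum_congr rfl fun i _ => by
            by_cases h : k = i
            · rw [if_pos h, if_pos h]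
            · rw [if_neg h, if_neg h, mul_zero]
      _ = D k k j * w j := by rw [Finset.sum_ite_eq]; simp
  rw [Finset.sum_congr rfl fun k _ => e k]
  have e2 : ∀ k, D k k j * w j = D j k k * w j := fun k => by rw [hD13 k k j]
  rw [Finset.sum_congr rfl fun k _ => e2 k, ← Finset.sum_mul, hDtr j, zero_mul]

private lemma kato_X2 (D : Fin n → Fin n → Fin n → ℝ) (t : Fin n → Fin n → ℝ)
    (v : Fin n → ℝ)
    (hD12 : ∀ k i j, D k i j = D i k j)
    (ht : ∀ i j, t i j = t j i) :
    ∑ k, ∑ i, ∑ j, D k i j * (v i * t j k)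
      = ∑ k, ∑ i, ∑ j, D k i j * (v k * t i j) := by
  rw [kato_sum3_swap12 (fun k i j => D k i j * (v i * t j k))]
  exact Finset.sum_congr rfl fun k _ => Finset.sum_congr rfl fun i _ =>
    Finset.sum_congr rfl fun j _ => by rw [← hD12 k i j, ht j i]

private lemma kato_X3 (D : Fin n → Fin n → Fin n → ℝ) (t : Fin n → Fin n → ℝ)
    (v : Fin n → ℝ)
    (hD13 : ∀ k i j, D k i j = D j i k)
    (ht : ∀ i j, t i j = t j i) :
    ∑ k, ∑ i, ∑ j, D k i j * (v j * t k i)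
      = ∑ k, ∑ i, ∑ j, D k i j * (v k * t i j) := by
  rw [kato_sum3_swap13 (fun k i j => D k i j * (v j * t k i))]
  exact Finset.sum_congr rfl fun k _ => Finset.sum_congr rfl fun i _ =>
    Finset.sum_congr rfl fun j _ => by rw [← hD13 k i j, ht j i]

private lemma kato_TT1 (t : Fin n → Fin n → ℝ) (v : Fin n → ℝ) :
    ∑ k, ∑ i, ∑ j, (v k * t i j) * (v k * t i j)
      = (∑ k, (v k)^2) * (∑ i, ∑ j, (t i j)^2) := by
  rw [Finset.sum_mul_sum]
  refine Finset.sum_congr rfl fun k _ => Finset.sum_congr rfl fun i _ => ?_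
  rw [Finset.mul_sum]
  exact Finset.sum_congr rfl fun j _ => by ring

private lemma kato_TT2 (t : Fin n → Fin n → ℝ) (v w : Fin n → ℝ)
    (ht : ∀ i j, t i j = t j i) (hw : ∀ k, w k = ∑ j, t k j * v j) :
    ∑ k, ∑ i, ∑ j, (v i * t j k) * (v k * t i j) = ∑ k, (w k)^2 := by
  rw [kato_sum3_rot (fun k i j => (v i * t j k) * (v k * t i j))]
  refine Finset.sum_congr rfl fun j _ => ?_
  calc ∑ k, ∑ i, (v i * t j k) * (v k * t i j)
      = ∑ k, ∑ i, (t j k * v k) * (t j i * v i) :=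
        Finset.sum_congr rfl fun k _ => Finset.sum_congr rfl fun i _ => by
          rw [ht i j]; ring
    _ = (∑ k, t j k * v k) * (∑ i, t j i * v i) := (Finset.sum_mul_sum _ _ _ _).symm
    _ = (w j)^2 := by rw [← hw j]; ring

private lemma kato_TT3 (t : Fin n → Fin n → ℝ) (v w : Fin n → ℝ)
    (ht : ∀ i j, t i j = t j i) (hw : ∀ k, w k = ∑ j, t k j * v j) :
    ∑ k, ∑ i, ∑ j, (v j * t k i) * (v k * t i j) = ∑ k, (w k)^2 := by
  rw [kato_sum3_swap12 (fun k i j => (v j * t k i) * (v k * t i j))]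
  refine Finset.sum_congr rfl fun k _ => ?_
  calc ∑ i, ∑ j, (v j * t i k) * (v i * t k j)
      = ∑ i, ∑ j, (t i k * v i) * (t k j * v j) :=
        Finset.sum_congr rfl fun i _ => Finset.sum_congr rfl fun j _ => by ring
    _ = (∑ i, t i k * v i) * (∑ j, t k j * v j) := (Finset.sum_mul_sum _ _ _ _).symm
    _ = (∑ i, t k i * v i) * (∑ j, t k j * v j) := by
        have e : (∑ i, t i k * v i) = ∑ i, t k i * v i :=
          Finset.sum_congr rfl fun i _ => by rw [ht i k]
        rw [e]
    _ = (w k)^2 := by rw [← hw k]; ring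

private lemma kato_TY1 (t : Fin n → Fin n → ℝ) (v w : Fin n → ℝ) :
    ∑ k, ∑ i, ∑ j, (if i = j then w k else 0) * (v k * t i j)
      = (∑ k, w k * v k) * (∑ i, t i i) := by
  rw [Finset.sum_mul_sum]
  refine Finset.sum_congr rfl fun k _ => Finset.sum_congr rfl fun i _ => ?_
  calc ∑ j, (if i = j then w k else 0) * (v k * t i j)
      = ∑ j, (if i = j then w k * (v k * t i j) else 0) :=
        Finset.sum_congr rfl fun j _ => by
          by_cases h : i = j
          · rw [if_pos h, if_pos h]
          · rw [if_neg h, if_neg h, zero_mul]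
    _ = w k * (v k * t i i) := by rw [Finset.sum_ite_eq]; simp
    _ = (w k * v k) * t i i := by ring

private lemma kato_TY2 (t : Fin n → Fin n → ℝ) (v w : Fin n → ℝ)
    (hw : ∀ k, w k = ∑ j, t k j * v j) :
    ∑ k, ∑ i, ∑ j, (if j = k then w i else 0) * (v k * t i j) = ∑ k, (w k)^2 := by
  have e : ∀ k i, ∑ j, (if j = k then w i else 0) * (v k * t i j) = w i * (t i k * v k) := by
    intro k i
    calc ∑ j, (if j = k then w i else 0) * (v k * t i j)
        = ∑ j, (if j = k then w i * (v k * t i j) else 0) :=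
          Finset.sum_congr rfl fun j _ => by
            by_cases h : j = k
            · rw [if_pos h, if_pos h]
            · rw [if_neg h, if_neg h, zero_mul]
      _ = w i * (v k * t i k) := by rw [Finset.sum_ite_eq']; simp
      _ = w i * (t i k * v k) := by ring
  rw [Finset.sum_congr rfl fun k _ => Finset.sum_congr rfl fun i _ => e k i]
  rw [Finset.sum_comm]
  refine Finset.sum_congr rfl fun i _ => ?_
  rw [← Finset.mul_sum, ← hw i]
  ring

private lemma kato_TY3 (t : Fin n → Fin n → ℝ) (v w : Fin n → ℝ)
    (ht : ∀ i j, t i j = t j i) (hw : ∀ k, w k = ∑ j, t k j * v j) :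
    ∑ k, ∑ i, ∑ j, (if k = i then w j else 0) * (v k * t i j) = ∑ k, (w k)^2 := by
  rw [kato_sum3_rot (fun k i j => (if k = i then w j else 0) * (v k * t i j))]
  refine Finset.sum_congr rfl fun j _ => ?_
  have e : ∀ k, ∑ i, (if k = i then w j else 0) * (v k * t i j) = w j * (t j k * v k) := by
    intro k
    calc ∑ i, (if k = i then w j else 0) * (v k * t i j)
        = ∑ i, (if k = i then w j * (v k * t i j) else 0) :=
          Finset.sum_congr rfl fun i _ => by
            by_cases h : k = i
            · rw [if_pos h, if_pos h]
            · rw [if_neg h, if_neg h, zero_mul]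
      _ = w j * (v k * t k j) := by rw [Finset.sum_ite_eq]; simp
      _ = w j * (t j k * v k) := by rw [ht k j]; ring
  rw [Finset.sum_congr rfl fun k _ => e k, ← Finset.mul_sum, ← hw j]
  ring



private lemma kato_lemB (A : Fin n → Fin n → Fin n → ℝ) (t : Fin n → Fin n → ℝ)
    (v w : Fin n → ℝ)
    (hA1 : ∀ k i j, A k i j = A k j i)
    (hA2 : ∀ k i j, A k i j = A j i k)
    (hAtr : ∀ k, ∑ i, A k i i = 0)
    (ht : ∀ i j, t i j = t j i) (httr : ∑ i, t i i = 0)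
    (hv : ∀ k, v k = ∑ i, ∑ j, A k i j * t i j)
    (hw : ∀ k, w k = ∑ j, t k j * v j) :
    (3*((n:ℝ)+2) * ∑ k, (v k)^2)^2 ≤
      (∑ k, ∑ i, ∑ j, (A k i j)^2) *
        (3*((n:ℝ)+2)^2 * (∑ i, ∑ j, (t i j)^2) * (∑ k, (v k)^2)
          + 6*(n:ℝ)*((n:ℝ)+2) * ∑ k, (w k)^2) := by
  have hA12 : ∀ k i j, A k i j = A i k j := fun k i j => by
    rw [hA2 k i j, hA1 j i k, hA2 j k i]
  set C : Fin n → Fin n → Fin n → ℝ := fun k i j =>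
    ((n:ℝ)+2) * (v k * t i j + v i * t j k + v j * t k i)
      - 2 * ((if i = j then w k else 0) + (if j = k then w i else 0)
        + (if k = i then w j else 0)) with hC
  have hswap : ∀ (p q : Fin n) (x : ℝ),
      (if p = q then x else 0) = (if q = p then x else 0) := by
    intro p q x
    by_cases h : p = q
    · rw [if_pos h, if_pos h.symm]
    · rw [if_neg h, if_neg fun hh => h hh.symm]
  have hC12 : ∀ k i j, C k i j = C i k j := by
    intro k i j
    simp only [hC]
    rw [ht k j, ht j i, ht i k, hswap k j (w i), hswap j i (w k), hswap i k (w j)]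
    ring
  have hC13 : ∀ k i j, C k i j = C j i k := by
    intro k i j
    simp only [hC]
    rw [ht i k, ht k j, ht j i, hswap i k (w j), hswap k j (w i), hswap j i (w k)]
    ring
  have hCtr : ∀ k, ∑ i, C k i i = 0 := by
    intro k
    have e : ∀ i, C k i i = ((n:ℝ)+2)*(v k * t i i) + ((n:ℝ)+2)*(t k i * v i)
        + ((n:ℝ)+2)*(t k i * v i) - 2*(w k) - 2*(if i = k then w i else 0)
        - 2*(if k = i then w i else 0) := by
      intro i
      simp only [hC, eq_self_iff_true, if_true]
      rw [ht i k]
      ring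
    rw [Finset.sum_congr rfl fun i _ => e i]
    simp only [Finset.sum_add_distrib, Finset.sum_sub_distrib, ← Finset.mul_sum,
      Finset.sum_ite_eq, Finset.sum_ite_eq', Finset.mem_univ, if_true,
      Finset.sum_const, card_univ, Fintype.card_fin, nsmul_eq_mul]
    rw [httr, ← hw k]
    ring
  have hAX1 : ∑ k, ∑ i, ∑ j, A k i j * (v k * t i j) = ∑ k, (v k)^2 := by
    calc ∑ k, ∑ i, ∑ j, A k i j * (v k * t i j)
        = ∑ k, v k * (∑ i, ∑ j, A k i j * t i j) := by
          refine Finset.sum_congr rfl fun k _ => ?_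
          rw [Finset.mul_sum]
          refine Finset.sum_congr rfl fun i _ => ?_
          rw [Finset.mul_sum]
          exact Finset.sum_congr rfl fun j _ => by ring
      _ = ∑ k, (v k)^2 := Finset.sum_congr rfl fun k _ => by rw [← hv k]; ring
  have hCX1 : ∑ k, ∑ i, ∑ j, C k i j * (v k * t i j)
      = ((n:ℝ)+2) * ((∑ k, (v k)^2) * (∑ i, ∑ j, (t i j)^2))
        + 2*(n:ℝ)*(∑ k, (w k)^2) := by
    calc ∑ k, ∑ i, ∑ j, C k i j * (v k * t i j)
        = ∑ k, ∑ i, ∑ j, (((n:ℝ)+2)*((v k * t i j) * (v k * t i j))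
            + ((n:ℝ)+2)*((v i * t j k) * (v k * t i j))
            + ((n:ℝ)+2)*((v j * t k i) * (v k * t i j))
            - 2*((if i = j then w k else 0) * (v k * t i j))
            - 2*((if j = k then w i else 0) * (v k * t i j))
            - 2*((if k = i then w j else 0) * (v k * t i j))) :=
          Finset.sum_congr rfl fun k _ => Finset.sum_congr rfl fun i _ =>
            Finset.sum_congr rfl fun j _ => by simp only [hC]; ring
      _ = ((n:ℝ)+2) * ((∑ k, (v k)^2) * (∑ i, ∑ j, (t i j)^2))
            + 2*(n:ℝ)*(∑ k, (w k)^2) := by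
          simp only [Finset.sum_add_distrib, Finset.sum_sub_distrib, ← Finset.mul_sum]
          rw [kato_TT1 t v, kato_TT2 t v w ht hw, kato_TT3 t v w ht hw,
            kato_TY1 t v w, kato_TY2 t v w hw, kato_TY3 t v w ht hw, httr]
          ring
  have hAC : ∑ k, ∑ i, ∑ j, A k i j * C k i j = 3*((n:ℝ)+2) * ∑ k, (v k)^2 := by
    calc ∑ k, ∑ i, ∑ j, A k i j * C k i j
        = ∑ k, ∑ i, ∑ j, (((n:ℝ)+2)*(A k i j * (v k * t i j))
            + ((n:ℝ)+2)*(A k i j * (v i * t j k))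
            + ((n:ℝ)+2)*(A k i j * (v j * t k i))
            - 2*(A k i j * (if i = j then w k else 0))
            - 2*(A k i j * (if j = k then w i else 0))
            - 2*(A k i j * (if k = i then w j else 0))) :=
          Finset.sum_congr rfl fun k _ => Finset.sum_congr rfl fun i _ =>
            Finset.sum_congr rfl fun j _ => by simp only [hC]; ring
      _ = 3*((n:ℝ)+2) * ∑ k, (v k)^2 := by
          simp only [Finset.sum_add_distrib, Finset.sum_sub_distrib, ← Finset.mul_sum]
          rw [kato_X2 A t v hA12 ht, kato_X3 A t v hA2 ht, hAX1,
            kato_Y1 A w hAtr, kato_Y2 A w hA12 hAtr, kato_Y3 A w hA2 hAtr]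
          ring
  have hCC : ∑ k, ∑ i, ∑ j, (C k i j)^2
      = 3*((n:ℝ)+2) * (((n:ℝ)+2) * ((∑ k, (v k)^2) * (∑ i, ∑ j, (t i j)^2))
          + 2*(n:ℝ)*(∑ k, (w k)^2)) := by
    calc ∑ k, ∑ i, ∑ j, (C k i j)^2
        = ∑ k, ∑ i, ∑ j, (((n:ℝ)+2)*(C k i j * (v k * t i j))
            + ((n:ℝ)+2)*(C k i j * (v i * t j k))
            + ((n:ℝ)+2)*(C k i j * (v j * t k i))
            - 2*(C k i j * (if i = j then w k else 0))
            - 2*(C k i j * (if j = k then w i else 0))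
            - 2*(C k i j * (if k = i then w j else 0))) :=
          Finset.sum_congr rfl fun k _ => Finset.sum_congr rfl fun i _ =>
            Finset.sum_congr rfl fun j _ => by simp only [hC]; ring
      _ = 3*((n:ℝ)+2) * (((n:ℝ)+2) * ((∑ k, (v k)^2) * (∑ i, ∑ j, (t i j)^2))
            + 2*(n:ℝ)*(∑ k, (w k)^2)) := by
          simp only [Finset.sum_add_distrib, Finset.sum_sub_distrib, ← Finset.mul_sum]
          rw [kato_X2 C t v hC12 ht, kato_X3 C t v hC13 ht, hCX1,
            kato_Y1 C w hCtr, kato_Y2 C w hC12 hCtr, kato_Y3 C w hC13 hCtr]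
          ring
  have hcs := kato_cs3 A C
  rw [hAC, hCC] at hcs
  calc (3*((n:ℝ)+2) * ∑ k, (v k)^2)^2
      ≤ (∑ k, ∑ i, ∑ j, (A k i j)^2) *
          (3*((n:ℝ)+2) * (((n:ℝ)+2) * ((∑ k, (v k)^2) * (∑ i, ∑ j, (t i j)^2))
            + 2*(n:ℝ)*(∑ k, (w k)^2))) := hcs
    _ = (∑ k, ∑ i, ∑ j, (A k i j)^2) *
          (3*((n:ℝ)+2)^2 * (∑ i, ∑ j, (t i j)^2) * (∑ k, (v k)^2)
            + 6*(n:ℝ)*((n:ℝ)+2) * ∑ k, (w k)^2) := by ring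

end lemB

set_option maxHeartbeats 1000000 in
private lemma kato_core_s15 (hn : 2 ≤ n) (A : Fin n → Fin n → Fin n → ℝ)
    (t : Fin n → Fin n → ℝ)
    (hA1 : ∀ k i j, A k i j = A k j i)
    (hA2 : ∀ k i j, A k i j = A j i k)
    (hAtr : ∀ k, ∑ i, A k i i = 0)
    (ht : ∀ i j, t i j = t j i) (httr : ∑ i, t i i = 0)
    (htne : ∃ i j, t i j ≠ 0) :
    ∑ k, ∑ i, ∑ j, (A k i j)^2 ≥
      ((n:ℝ) + 2) / n *
        ∑ k, (∑ i, ∑ j, A k i j * t i j / Real.sqrt (∑ i', ∑ j', (t i' j')^2))^2 := by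
  have hn2 : (2:ℝ) ≤ (n:ℝ) := by exact_mod_cast hn
  obtain ⟨i0, j0, hne⟩ := htne
  have hpos : 0 < (t i0 j0)^2 := pow_two_pos_of_ne_zero hne
  have hrow : 0 < ∑ j, (t i0 j)^2 :=
    Finset.sum_pos' (fun _ _ => sq_nonneg _) ⟨j0, Finset.mem_univ _, hpos⟩
  have hS : 0 < ∑ i, ∑ j, (t i j)^2 :=
    Finset.sum_pos' (fun i _ => Finset.sum_nonneg fun _ _ => sq_nonneg _)
      ⟨i0, Finset.mem_univ _, hrow⟩
  have hsqrt : Real.sqrt (∑ i, ∑ j, (t i j)^2) ^ 2 = ∑ i, ∑ j, (t i j)^2 :=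
    Real.sq_sqrt hS.le
  set v : Fin n → ℝ := fun k => ∑ i, ∑ j, A k i j * t i j with hvdef
  set w : Fin n → ℝ := fun k => ∑ j, t k j * v j with hwdef
  have hv : ∀ k, v k = ∑ i, ∑ j, A k i j * t i j := fun k => by rw [hvdef]
  have hw : ∀ k, w k = ∑ j, t k j * v j := fun k => by rw [hwdef]
  clear_value v w
  clear hvdef hwdef
  rw [ge_iff_le]
  have hfold : ∀ k, (∑ i, ∑ j, A k i j * t i j / Real.sqrt (∑ i', ∑ j', (t i' j')^2))
      = v k / Real.sqrt (∑ i', ∑ j', (t i' j')^2) := by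
    intro k
    rw [hv k, Finset.sum_div]
    exact Finset.sum_congr rfl fun i _ => by rw [Finset.sum_div]
  calc ((n:ℝ) + 2) / n *
        ∑ k, (∑ i, ∑ j, A k i j * t i j / Real.sqrt (∑ i', ∑ j', (t i' j')^2))^2
      = ((n:ℝ) + 2) / n * ((∑ k, (v k)^2) / (∑ i, ∑ j, (t i j)^2)) := by
        congr 1
        rw [Finset.sum_div]
        exact Finset.sum_congr rfl fun k _ => by rw [hfold k, div_pow, hsqrt]
    _ ≤ ∑ k, ∑ i, ∑ j, (A k i j)^2 := by
        have hB := kato_lemB A t v w hA1 hA2 hAtr ht httr hv hw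
        have h1 := kato_lem1 hn t v w ht httr hw
        have hSA0 : (0:ℝ) ≤ ∑ k, ∑ i, ∑ j, (A k i j)^2 :=
          Finset.sum_nonneg fun _ _ => Finset.sum_nonneg fun _ _ =>
            Finset.sum_nonneg fun _ _ => sq_nonneg _
        have hQ0 : (0:ℝ) ≤ ∑ k, (v k)^2 := Finset.sum_nonneg fun _ _ => sq_nonneg _
        rw [div_mul_div_comm, div_le_iff₀ (by positivity)]
        rcases eq_or_lt_of_le hQ0 with hQ | hQ
        · rw [← hQ]
          have : (0:ℝ) ≤ (∑ k, ∑ i, ∑ j, (A k i j)^2) * ((n:ℝ) * ∑ i, ∑ j, (t i j)^2) := by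
            positivity
          linarith
        · have h1' : (∑ k, ∑ i, ∑ j, (A k i j)^2) * (6*((n:ℝ)+2)*((n:ℝ) * ∑ k, (w k)^2))
              ≤ (∑ k, ∑ i, ∑ j, (A k i j)^2) *
                (6*((n:ℝ)+2)*(((n:ℝ)-1) * (∑ i, ∑ j, (t i j)^2) * ∑ k, (v k)^2)) := by
            apply mul_le_mul_of_nonneg_left _ hSA0
            apply mul_le_mul_of_nonneg_left h1 (by positivity)
          have key : 9*((n:ℝ)+2)^2*(∑ k, (v k)^2)^2
              ≤ (∑ k, ∑ i, ∑ j, (A k i j)^2) *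
                (9*(n:ℝ)*((n:ℝ)+2)*((∑ i, ∑ j, (t i j)^2) * ∑ k, (v k)^2)) := by
            nlinarith [hB, h1']
          have hmul : (0:ℝ) < 9*((n:ℝ)+2)*(∑ k, (v k)^2) := by positivity
          have key2 : ((n:ℝ)+2) * (∑ k, (v k)^2) * (9*((n:ℝ)+2)*(∑ k, (v k)^2))
              ≤ (∑ k, ∑ i, ∑ j, (A k i j)^2) * ((n:ℝ) * ∑ i, ∑ j, (t i j)^2) *
                (9*((n:ℝ)+2)*(∑ k, (v k)^2)) := by nlinarith [key]
          exact le_of_mul_le_mul_right key2 hmul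


/-- Refined Kato inequality for trace-free Codazzi tensors on an open subset of ℝⁿ: at every
point where `T ≠ 0`,
`∑_{k,i,j} (∂_k T_{ij})² ≥ ((n+2)/n) · ∑_k (⟨∂_k T, T⟩ / ‖T‖)²`,
where `‖T(x)‖ = √(∑_{i,j} T_{ij}(x)²)` is the Frobenius norm. -/
theorem tracefree_codazzi_refined_kato {n : ℕ} (hn : 2 ≤ n)
    (Ω : Set (Fin n → ℝ)) (hΩ : IsOpen Ω)
    (T : Fin n → Fin n → (Fin n → ℝ) → ℝ)
    (hdiff : ∀ i j, ∀ x ∈ Ω, DifferentiableAt ℝ (T i j) x)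
    (hsymm : ∀ x ∈ Ω, ∀ i j, T i j x = T j i x)
    (htr : ∀ x ∈ Ω, ∑ i, T i i x = 0)
    (hcod : ∀ i j k, ∀ x ∈ Ω,
      fderiv ℝ (T i j) x (Pi.single k 1) = fderiv ℝ (T i k) x (Pi.single j 1)) :
    ∀ x ∈ Ω, (∃ i j, T i j x ≠ 0) →
      ∑ k, ∑ i, ∑ j, (fderiv ℝ (T i j) x (Pi.single k 1)) ^ 2 ≥
        (((n : ℝ) + 2) / n) *
          ∑ k, (∑ i, ∑ j, fderiv ℝ (T i j) x (Pi.single k 1) * T i j x /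
            Real.sqrt (∑ i', ∑ j', (T i' j' x) ^ 2)) ^ 2 := by
  intro x hx hT
  have hmem : Ω ∈ nhds x := hΩ.mem_nhds hx
  have hA1 : ∀ k i j, fderiv ℝ (T i j) x (Pi.single k 1)
      = fderiv ℝ (T j i) x (Pi.single k 1) := by
    intro k i j
    have heq : T i j =ᶠ[nhds x] T j i :=
      Filter.eventuallyEq_of_mem hmem fun y hy => hsymm y hy i j
    rw [heq.fderiv_eq]
  have hAtr : ∀ k, ∑ i, fderiv ℝ (T i i) x (Pi.single k 1) = 0 := by
    intro k
    have hsum : fderiv ℝ (fun y => ∑ i, T i i y) x = ∑ i, fderiv ℝ (T i i) x :=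
      fderiv_fun_sum fun i _ => hdiff i i x hx
    have hzero : (fun y => ∑ i, T i i y) =ᶠ[nhds x] (fun _ => (0:ℝ)) :=
      Filter.eventuallyEq_of_mem hmem fun y hy => htr y hy
    have h0 : fderiv ℝ (fun y => ∑ i, T i i y) x = 0 := by
      rw [hzero.fderiv_eq]
      exact fderiv_const_apply 0
    calc ∑ i, fderiv ℝ (T i i) x (Pi.single k 1)
        = (∑ i, fderiv ℝ (T i i) x) (Pi.single k 1) := by
          rw [ContinuousLinearMap.sum_apply]
      _ = (fderiv ℝ (fun y => ∑ i, T i i y) x) (Pi.single k 1) := by rw [hsum]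
      _ = 0 := by rw [h0]; rfl
  exact kato_core_s15 hn (fun k i j => fderiv ℝ (T i j) x (Pi.single k 1))
    (fun i j => T i j x) hA1 (fun k i j => hcod i j k x hx) hAtr
    (fun i j => hsymm x hx i j) (htr x hx) hT
end
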